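/- arXiv:1302.0902 — 9 statements merged into one kernel-verified Lean document; each statement's English description precedes it below -/
import Mathlib

section
/- Concatenation of paths realizes the tensor product of geometric crystals: for π₁ ∈ C₀([0,T],V), π₂ ∈ C₀([0,S],V) and every c ∈ ℝ, (i) (π₁⋆π₂)(T+S) = π₁(T) + π₂(S); (ii) ε_α(π₁⋆π₂) = ε_α(π₁) + log(1 + e^{ε_α(π₂) − φ_α(π₁)}); (iii) e_α^c·(π₁⋆π₂) = (e_α^{c₁}·π₁) ⋆ (e_α^{c₂}·π₂), where c₁ = log((e^{c+φ_α(π₁)} + e^{ε_α(π₂)})/(e^{φ_α(π₁)} + e^{ε_α(π₂)})) and c₂ = c − c₁. -/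
open MeasureTheory

/-- `ε_α(π) = log ∫₀^T e^{-α(π(s))} ds`. -/
noncomputable def pathEps {V : Type*} [NormedAddCommGroup V] [NormedSpace ℝ V]
    (α : V →ₗ[ℝ] ℝ) (T : ℝ) (π : ℝ → V) : ℝ :=
  Real.log (∫ s in (0:ℝ)..T, Real.exp (-α (π s)))

/-- `φ_α(π) = α(π(T)) + ε_α(π)`. -/
noncomputable def pathPhi {V : Type*} [NormedAddCommGroup V] [NormedSpace ℝ V]
    (α : V →ₗ[ℝ] ℝ) (T : ℝ) (π : ℝ → V) : ℝ :=
  α (π T) + pathEps α T π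

/-- The geometric Littelmann operator on paths over the horizon `T`. -/
noncomputable def pathAct {V : Type*} [NormedAddCommGroup V] [NormedSpace ℝ V]
    (α : V →ₗ[ℝ] ℝ) (αv : V) (T : ℝ) (c : ℝ) (π : ℝ → V) : ℝ → V :=
  fun t => π t + Real.log (1 + ((Real.exp c - 1) / Real.exp (pathEps α T π)) *
    ∫ s in (0:ℝ)..t, Real.exp (-α (π s))) • αv

/-- Concatenation `π₁ ⋆ π₂` of a path on `[0,T]` and a path on `[0,S]`. -/
noncomputable def pathConcat {V : Type*} [AddCommGroup V] (T : ℝ) (π₁ π₂ : ℝ → V) : ℝ → V :=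
  fun t => if t ≤ T then π₁ t else π₁ T + π₂ (t - T)

/-!
On `[0, T]` the concatenation is `π₁`, and on `[T, T + S]` it is `π₁(T) + π₂(· - T)`, so the
partial integral `∫₀^t e^{-α(π₁⋆π₂)}` equals that of `π₁` up to `T` and
`I₁ + e^{-α(π₁(T))} ∫₀^{t-T} e^{-α(π₂)}` afterwards, where `Iᵢ = e^{ε_α(πᵢ)}`. The rest is
algebra: `y = e^{c₁}` satisfies `y = 1 + (e^c - 1) I₁ / e^{ε_α(π₁⋆π₂)}`, so both operators agree
on `[0, T]`, and on `[T, T + S]` the argument of the logarithm in `e_α^c·(π₁⋆π₂)` is `y` times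
the one in `e_α^{c₂}·π₂`; the factor `y` contributes `c₁ α^∨`, the endpoint shift of
`e_α^{c₁}·π₁`.
-/

open Set
open Real (exp log exp_pos exp_log log_exp exp_add exp_neg exp_sub log_mul continuous_exp)

section Concat

variable {V : Type*} [AddCommGroup V] {T t : ℝ} {π₁ π₂ : ℝ → V}

theorem pathConcat_of_le (ht : t ≤ T) : pathConcat T π₁ π₂ t = π₁ t := if_pos ht

theorem pathConcat_of_lt (ht : T < t) : pathConcat T π₁ π₂ t = π₁ T + π₂ (t - T) :=
  if_neg ht.not_ge

theorem pathConcat_of_ge (h₂0 : π₂ 0 = 0) (ht : T ≤ t) :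
    pathConcat T π₁ π₂ t = π₁ T + π₂ (t - T) := by
  rcases ht.eq_or_lt with rfl | ht
  · rw [pathConcat_of_le le_rfl, sub_self, h₂0, add_zero]
  · exact pathConcat_of_lt ht

theorem pathConcat_add {S : ℝ} (hS : 0 < S) : pathConcat T π₁ π₂ (T + S) = π₁ T + π₂ S := by
  rw [pathConcat_of_lt (lt_add_of_pos_right T hS), add_sub_cancel_left]

end Concat

section PathIntegral

variable {V : Type*} [NormedAddCommGroup V] [NormedSpace ℝ V] (α : V →ₗ[ℝ] ℝ)

noncomputable def pathIntegral (π : ℝ → V) (t : ℝ) : ℝ :=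
  ∫ s in (0:ℝ)..t, exp (-α (π s))

theorem pathEps_eq_log_pathIntegral (T : ℝ) (π : ℝ → V) :
    pathEps α T π = log (pathIntegral α π T) := rfl

theorem pathAct_apply (αv : V) (T c : ℝ) (π : ℝ → V) (t : ℝ) :
    pathAct α αv T c π t =
      π t + log (1 + (exp c - 1) / exp (pathEps α T π) * pathIntegral α π t) • αv := rfl

variable {α} {π π₁ π₂ : ℝ → V} {T t : ℝ}

theorem exp_pathEps (h : 0 < pathIntegral α π T) : exp (pathEps α T π) = pathIntegral α π T :=
  exp_log h

theorem exp_pathPhi (h : 0 < pathIntegral α π T) :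
    exp (pathPhi α T π) = exp (α (π T)) * pathIntegral α π T := by
  rw [pathPhi, exp_add, exp_pathEps h]

theorem pathAct_apply_right (αv : V) (c : ℝ) (h : 0 < pathIntegral α π T) :
    pathAct α αv T c π T = π T + c • αv := by
  rw [pathAct_apply, exp_pathEps h, div_mul_cancel₀ _ h.ne', add_sub_cancel, log_exp]

theorem pathIntegral_nonneg (ht : 0 ≤ t) : 0 ≤ pathIntegral α π t :=
  intervalIntegral.integral_nonneg ht fun _ _ => (exp_pos _).le

theorem pathIntegral_concat_of_le (hT : 0 ≤ T) (ht : t ≤ T) :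
    pathIntegral α (pathConcat T π₁ π₂) t = pathIntegral α π₁ t :=
  intervalIntegral.integral_congr fun s hs => by
    simp only [pathConcat_of_le ((mem_Icc.1 hs).2.trans (max_le hT ht))]

section FiniteDimensional

variable [FiniteDimensional ℝ V]

theorem continuousOn_exp_neg_apply {s : Set ℝ} (α : V →ₗ[ℝ] ℝ) (h : ContinuousOn π s) :
    ContinuousOn (fun s => exp (-α (π s))) s :=
  continuous_exp.comp_continuousOn (α.continuous_of_finiteDimensional.comp_continuousOn h).neg

theorem pathIntegral_pos (hT : 0 < T) (h : ContinuousOn π (Icc 0 T)) :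
    0 < pathIntegral α π T :=
  intervalIntegral.intervalIntegral_pos_of_pos
    ((continuousOn_exp_neg_apply α h).intervalIntegrable_of_Icc hT.le) (fun _ => exp_pos _) hT

theorem pathIntegral_le (h : ContinuousOn π (Icc 0 T)) (ht : 0 ≤ t) (htT : t ≤ T) :
    pathIntegral α π t ≤ pathIntegral α π T :=
  intervalIntegral.integral_mono_interval le_rfl ht htT
    (ae_of_all _ fun _ => (exp_pos _).le)
    ((continuousOn_exp_neg_apply α h).intervalIntegrable_of_Icc (ht.trans htT))

theorem pathIntegral_concat (hT : 0 ≤ T) (ht : T ≤ t) (h₁ : ContinuousOn π₁ (Icc 0 T))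
    (h₂ : ContinuousOn π₂ (Icc 0 (t - T))) (h₂0 : π₂ 0 = 0) :
    pathIntegral α (pathConcat T π₁ π₂) t =
      pathIntegral α π₁ T + exp (-α (π₁ T)) * pathIntegral α π₂ (t - T) := by
  set g := fun s => exp (-α (pathConcat T π₁ π₂ s))
  have hg₁ : EqOn g (fun s => exp (-α (π₁ s))) (Icc 0 T) := fun s hs => by
    simp only [g, pathConcat_of_le hs.2]
  have hg₂ : EqOn g (fun s => exp (-α (π₁ T)) * exp (-α (π₂ (s - T)))) (Icc T t) :=
    fun s hs => by simp only [g, pathConcat_of_ge h₂0 hs.1, map_add, neg_add, exp_add]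
  have hcont : ContinuousOn (fun s => exp (-α (π₁ T)) * exp (-α (π₂ (s - T)))) (Icc T t) :=
    continuousOn_const.mul ((continuousOn_exp_neg_apply α h₂).comp
      (continuous_sub_right T).continuousOn
      fun s hs => ⟨sub_nonneg.2 hs.1, sub_le_sub_right hs.2 T⟩)
  rw [pathIntegral, ← intervalIntegral.integral_add_adjacent_intervals
      (((continuousOn_exp_neg_apply α h₁).congr hg₁).intervalIntegrable_of_Icc hT)
      ((hcont.congr hg₂).intervalIntegrable_of_Icc ht),
    intervalIntegral.integral_congr (hg₁.mono (uIcc_of_le hT).subset),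
    intervalIntegral.integral_congr (hg₂.mono (uIcc_of_le ht).subset),
    intervalIntegral.integral_const_mul,
    intervalIntegral.integral_comp_sub_right (fun s => exp (-α (π₂ s))), sub_self]
  rfl

end FiniteDimensional

end PathIntegral

section TensorAlgebra

variable {A I₁ I₂ G x y : ℝ}

theorem tensor_coeff_eq (hA : 0 < A) (hI₁ : 0 < I₁) (hI₂ : 0 < I₂)
    (hy : y = (x * (A * I₁) + I₂) / (A * I₁ + I₂)) :
    (x - 1) / (I₁ + A⁻¹ * I₂) = (y - 1) / I₁ := by
  subst hy
  field_simp
  ring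

theorem tensor_factor_eq (hA : 0 < A) (hI₁ : 0 < I₁) (hI₂ : 0 < I₂) (hx : 0 < x)
    (hy : y = (x * (A * I₁) + I₂) / (A * I₁ + I₂)) :
    1 + (x - 1) / (I₁ + A⁻¹ * I₂) * (I₁ + A⁻¹ * G) = y * (1 + (x / y - 1) / I₂ * G) := by
  have hy0 : 0 < y := hy ▸ by positivity
  subst hy
  field_simp
  ring

theorem one_add_div_mul_pos {I z : ℝ} (hI : 0 < I) (hG : 0 ≤ G) (hGI : G ≤ I) (hz : 0 < z) :
    0 < 1 + (z - 1) / I * G := by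
  have : 1 + (z - 1) / I * G = (I - G + z * G) / I := by field_simp; ring
  rw [this]
  refine div_pos ?_ hI
  rcases hG.eq_or_lt with rfl | hG
  · simpa using hI
  · nlinarith [mul_pos hz hG]

theorem log_tensor_factor {c₁ : ℝ} (hA : 0 < A) (hI₁ : 0 < I₁) (hI₂ : 0 < I₂) (hx : 0 < x)
    (hG : 0 ≤ G) (hGI : G ≤ I₂) (hy : exp c₁ = (x * (A * I₁) + I₂) / (A * I₁ + I₂)) :
    log (1 + (x - 1) / (I₁ + A⁻¹ * I₂) * (I₁ + A⁻¹ * G)) =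
      c₁ + log (1 + (x / exp c₁ - 1) / I₂ * G) := by
  rw [tensor_factor_eq hA hI₁ hI₂ hx hy, log_mul (exp_pos c₁).ne'
    (one_add_div_mul_pos hI₂ hG hGI (div_pos hx (exp_pos c₁))).ne', log_exp]

end TensorAlgebra

section Tensor

variable {V : Type*} [NormedAddCommGroup V] [NormedSpace ℝ V] [FiniteDimensional ℝ V]
  {α : V →ₗ[ℝ] ℝ} {π₁ π₂ : ℝ → V} {T S : ℝ}

theorem pathIntegral_concat_add (hT : 0 < T) (hS : 0 ≤ S) (h₁ : ContinuousOn π₁ (Icc 0 T))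
    (h₂ : ContinuousOn π₂ (Icc 0 S)) (h₂0 : π₂ 0 = 0) :
    pathIntegral α (pathConcat T π₁ π₂) (T + S) =
      pathIntegral α π₁ T + (exp (α (π₁ T)))⁻¹ * pathIntegral α π₂ S := by
  have h₂' : ContinuousOn π₂ (Icc 0 (T + S - T)) := by rwa [add_sub_cancel_left]
  rw [pathIntegral_concat hT.le (le_add_of_nonneg_right hS) h₁ h₂' h₂0, add_sub_cancel_left,
    exp_neg]

theorem exp_pathEps_concat (hT : 0 < T) (hS : 0 < S) (h₁ : ContinuousOn π₁ (Icc 0 T))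
    (h₂ : ContinuousOn π₂ (Icc 0 S)) (h₂0 : π₂ 0 = 0) :
    exp (pathEps α (T + S) (pathConcat T π₁ π₂)) =
      pathIntegral α π₁ T + (exp (α (π₁ T)))⁻¹ * pathIntegral α π₂ S := by
  have hI₁ := pathIntegral_pos (α := α) hT h₁
  have hI₂ := pathIntegral_pos (α := α) hS h₂
  rw [pathEps_eq_log_pathIntegral, pathIntegral_concat_add hT hS.le h₁ h₂ h₂0,
    exp_log (by positivity)]

theorem pathEps_concat (hT : 0 < T) (hS : 0 < S) (h₁ : ContinuousOn π₁ (Icc 0 T))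
    (h₂ : ContinuousOn π₂ (Icc 0 S)) (h₂0 : π₂ 0 = 0) :
    pathEps α (T + S) (pathConcat T π₁ π₂) =
      pathEps α T π₁ + log (1 + exp (pathEps α S π₂ - pathPhi α T π₁)) := by
  have hI₁ := pathIntegral_pos (α := α) hT h₁
  have hI₂ := pathIntegral_pos (α := α) hS h₂
  rw [exp_sub, exp_pathEps hI₂, exp_pathPhi hI₁, pathEps_eq_log_pathIntegral,
    pathIntegral_concat_add hT hS.le h₁ h₂ h₂0, pathEps_eq_log_pathIntegral,
    ← log_mul hI₁.ne' (by positivity)]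
  congr 1
  field_simp

variable {αv : V} {c c₁ c₂ t : ℝ}

theorem pathAct_concat_of_le (hT : 0 < T) (hS : 0 < S) (h₁ : ContinuousOn π₁ (Icc 0 T))
    (h₂ : ContinuousOn π₂ (Icc 0 S)) (h₂0 : π₂ 0 = 0)
    (hc₁ : exp c₁ = (exp c * (exp (α (π₁ T)) * pathIntegral α π₁ T) +
      pathIntegral α π₂ S) / (exp (α (π₁ T)) * pathIntegral α π₁ T + pathIntegral α π₂ S))
    (ht : t ≤ T) :
    pathAct α αv (T + S) c (pathConcat T π₁ π₂) t =
      pathConcat T (pathAct α αv T c₁ π₁) (pathAct α αv S c₂ π₂) t := by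
  have hI₁ := pathIntegral_pos (α := α) hT h₁
  rw [pathConcat_of_le ht, pathAct_apply, pathAct_apply, pathConcat_of_le ht,
    pathIntegral_concat_of_le hT.le ht, exp_pathEps_concat hT hS h₁ h₂ h₂0, exp_pathEps hI₁,
    tensor_coeff_eq (exp_pos _) hI₁ (pathIntegral_pos hS h₂) hc₁]

theorem pathAct_concat_of_lt (hT : 0 < T) (hS : 0 < S) (h₁ : ContinuousOn π₁ (Icc 0 T))
    (h₂ : ContinuousOn π₂ (Icc 0 S)) (h₂0 : π₂ 0 = 0)
    (hc₁ : exp c₁ = (exp c * (exp (α (π₁ T)) * pathIntegral α π₁ T) +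
      pathIntegral α π₂ S) / (exp (α (π₁ T)) * pathIntegral α π₁ T + pathIntegral α π₂ S))
    (hc₂ : c₂ = c - c₁) (ht : T < t) (htS : t ≤ T + S) :
    pathAct α αv (T + S) c (pathConcat T π₁ π₂) t =
      pathConcat T (pathAct α αv T c₁ π₁) (pathAct α αv S c₂ π₂) t := by
  have hI₁ := pathIntegral_pos (α := α) hT h₁
  have hI₂ := pathIntegral_pos (α := α) hS h₂
  have htS' : t - T ≤ S := by linarith
  have hG := sub_nonneg.2 ht.le
  rw [pathConcat_of_lt ht, pathAct_apply_right αv c₁ hI₁, pathAct_apply, pathAct_apply,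
    pathConcat_of_lt ht, pathIntegral_concat hT.le ht.le h₁ (h₂.mono (Icc_subset_Icc le_rfl htS'))
      h₂0, exp_pathEps_concat hT hS h₁ h₂ h₂0, exp_pathEps hI₂, exp_neg,
    log_tensor_factor (exp_pos _) hI₁ hI₂ (exp_pos c) (pathIntegral_nonneg hG)
      (pathIntegral_le h₂ hG htS') hc₁, hc₂, exp_sub, add_smul]
  abel

end Tensor

theorem concat_realizes_tensor_product_general
    {V : Type*} [NormedAddCommGroup V] [NormedSpace ℝ V] [FiniteDimensional ℝ V]
    (T S : ℝ) (hT : 0 < T) (hS : 0 < S)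
    (α : V →ₗ[ℝ] ℝ) (αv : V)
    (π₁ π₂ : ℝ → V)
    (h₁ : ContinuousOn π₁ (Set.Icc 0 T))
    (h₂ : ContinuousOn π₂ (Set.Icc 0 S)) (h₂0 : π₂ 0 = 0)
    (c c₁ c₂ : ℝ)
    (hc₁ : c₁ = Real.log ((Real.exp (c + pathPhi α T π₁) + Real.exp (pathEps α S π₂)) /
      (Real.exp (pathPhi α T π₁) + Real.exp (pathEps α S π₂))))
    (hc₂ : c₂ = c - c₁) :
    (pathConcat T π₁ π₂ (T + S) = π₁ T + π₂ S) ∧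
    (pathEps α (T + S) (pathConcat T π₁ π₂) =
      pathEps α T π₁ + Real.log (1 + Real.exp (pathEps α S π₂ - pathPhi α T π₁))) ∧
    (∀ t ∈ Set.Icc (0:ℝ) (T + S),
      pathAct α αv (T + S) c (pathConcat T π₁ π₂) t =
        pathConcat T (pathAct α αv T c₁ π₁) (pathAct α αv S c₂ π₂) t) := by
  have hI₁ := pathIntegral_pos (α := α) hT h₁
  have hI₂ := pathIntegral_pos (α := α) hS h₂
  have hexp_c₁ : exp c₁ = (exp c * (exp (α (π₁ T)) * pathIntegral α π₁ T) +
      pathIntegral α π₂ S) / (exp (α (π₁ T)) * pathIntegral α π₁ T + pathIntegral α π₂ S) := by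
    rw [hc₁, exp_log (by positivity), exp_add, exp_pathPhi hI₁, exp_pathEps hI₂]
  refine ⟨pathConcat_add hS, pathEps_concat hT hS h₁ h₂ h₂0, fun t ht => ?_⟩
  rcases le_or_gt t T with htT | hTt
  · exact pathAct_concat_of_le hT hS h₁ h₂ h₂0 hexp_c₁ htT
  · exact pathAct_concat_of_lt hT hS h₁ h₂ h₂0 hexp_c₁ hc₂ hTt ht.2

/-- Concatenation of paths realizes the tensor product of geometric crystals. -/
theorem concat_realizes_tensor_product
    {V : Type*} [NormedAddCommGroup V] [NormedSpace ℝ V] [FiniteDimensional ℝ V]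
    (T S : ℝ) (hT : 0 < T) (hS : 0 < S)
    (α : V →ₗ[ℝ] ℝ) (αv : V) (hpair : α αv = 2)
    (π₁ π₂ : ℝ → V)
    (h₁ : ContinuousOn π₁ (Set.Icc 0 T)) (h₁0 : π₁ 0 = 0)
    (h₂ : ContinuousOn π₂ (Set.Icc 0 S)) (h₂0 : π₂ 0 = 0)
    (c c₁ c₂ : ℝ)
    (hc₁ : c₁ = Real.log ((Real.exp (c + pathPhi α T π₁) + Real.exp (pathEps α S π₂)) /
      (Real.exp (pathPhi α T π₁) + Real.exp (pathEps α S π₂))))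
    (hc₂ : c₂ = c - c₁) :
    (pathConcat T π₁ π₂ (T + S) = π₁ T + π₂ S) ∧
    (pathEps α (T + S) (pathConcat T π₁ π₂) =
      pathEps α T π₁ + Real.log (1 + Real.exp (pathEps α S π₂ - pathPhi α T π₁))) ∧
    (∀ t ∈ Set.Icc (0:ℝ) (T + S),
      pathAct α αv (T + S) c (pathConcat T π₁ π₂) t =
        pathConcat T (pathAct α αv T c₁ π₁) (pathAct α αv S c₂ π₂) t) :=
  concat_realizes_tensor_product_general T S hT hS α αv π₁ π₂ h₁ h₂ h₂0 c c₁ c₂ hc₁ hc₂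
end

section
/- Duality exchanges the high and low rank-one path transforms: for every π ∈ C₀([0,T],V) and every t with 0 ≤ t < T, (e_α^{−∞}·(ι(π)))(t) = (𝒯_α π)(T−t) − (𝒯_α π)(T), i.e. e_α^{−∞} ∘ ι = ι ∘ 𝒯_α. -/
open MeasureTheory

/-- The high rank-one transform `(𝒯_α π)(t) = π(t) + log(∫₀^t e^{-α(π(s))} ds)·α^∨`. -/
noncomputable def pathHighT {V : Type*} [NormedAddCommGroup V] [NormedSpace ℝ V]
    (α : V →ₗ[ℝ] ℝ) (αv : V) (π : ℝ → V) : ℝ → V :=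
  fun t => π t + Real.log (∫ s in (0:ℝ)..t, Real.exp (-α (π s))) • αv

/-- The low rank-one transform
`(e_α^{-∞}·π)(t) = π(t) + log(1 - (∫₀^t e^{-α(π)})/(∫₀^T e^{-α(π)}))·α^∨`. -/
noncomputable def pathLowInf {V : Type*} [NormedAddCommGroup V] [NormedSpace ℝ V]
    (α : V →ₗ[ℝ] ℝ) (αv : V) (T : ℝ) (π : ℝ → V) : ℝ → V :=
  fun t => π t + Real.log (1 - (∫ s in (0:ℝ)..t, Real.exp (-α (π s))) /
    ∫ s in (0:ℝ)..T, Real.exp (-α (π s))) • αv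

/-- The duality `ι(π)(t) = π(T - t) - π(T)`. -/
def pathIota {V : Type*} [AddCommGroup V] (T : ℝ) (π : ℝ → V) : ℝ → V :=
  fun t => π (T - t) - π T

/-- Duality exchanges the high and low rank-one path transforms:
`e_α^{-∞} ∘ ι = ι ∘ 𝒯_α`. -/
theorem low_high_duality
    {V : Type*} [NormedAddCommGroup V] [NormedSpace ℝ V] [FiniteDimensional ℝ V]
    (T : ℝ) (hT : 0 < T)
    (α : V →ₗ[ℝ] ℝ) (αv : V) (hpair : α αv = 2)
    (π : ℝ → V) (hπ : ContinuousOn π (Set.Icc 0 T)) (hπ0 : π 0 = 0) :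
    ∀ t : ℝ, 0 ≤ t → t < T →
      pathLowInf α αv T (pathIota T π) t =
        pathHighT α αv π (T - t) - pathHighT α αv π T := by
  intro t ht htT
  set f : ℝ → ℝ := fun s => Real.exp (-α (π s)) with hf
  have hα : Continuous α := α.continuous_of_finiteDimensional
  have hcont : ContinuousOn f (Set.Icc 0 T) :=
    Real.continuous_exp.comp_continuousOn ((hα.comp_continuousOn hπ).neg)
  have hint : ∀ a b, a ∈ Set.Icc (0:ℝ) T → b ∈ Set.Icc (0:ℝ) T →
      IntervalIntegrable f volume a b := fun a b ha hb =>
    (hcont.mono (Set.uIcc_subset_Icc ha hb)).intervalIntegrable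
  have h1 : ∀ u, 0 ≤ u → u ≤ T →
      (∫ s in (0:ℝ)..u, Real.exp (-α (pathIota T π s)))
        = Real.exp (α (π T)) * ∫ x in (T-u:ℝ)..T, f x := by
    intro u hu huT
    have key : ∀ s, Real.exp (-α (pathIota T π s)) = Real.exp (α (π T)) * f (T - s) := by
      intro s
      simp only [pathIota, map_sub, hf, neg_sub]
      rw [← Real.exp_add]
      ring_nf
    simp only [key]
    rw [intervalIntegral.integral_const_mul, intervalIntegral.integral_comp_sub_left f T]
    norm_num
  have hposT : 0 < ∫ s in (0:ℝ)..T, f s :=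
    intervalIntegral.intervalIntegral_pos_of_pos_on
      (hint 0 T ⟨le_refl _, le_of_lt hT⟩ ⟨le_of_lt hT, le_refl _⟩)
      (fun x _ => Real.exp_pos _) hT
  have hposTt : 0 < ∫ s in (0:ℝ)..(T - t), f s :=
    intervalIntegral.intervalIntegral_pos_of_pos_on
      (hint 0 (T-t) ⟨le_refl _, le_of_lt hT⟩ ⟨by linarith, by linarith⟩)
      (fun x _ => Real.exp_pos _) (by linarith)
  have hsplit : (∫ s in (0:ℝ)..T, f s) - (∫ s in (0:ℝ)..(T-t), f s)
      = ∫ s in (T-t:ℝ)..T, f s :=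
    intervalIntegral.integral_interval_sub_left
      (hint 0 T ⟨le_refl _, le_of_lt hT⟩ ⟨le_of_lt hT, le_refl _⟩)
      (hint 0 (T-t) ⟨le_refl _, le_of_lt hT⟩ ⟨by linarith, by linarith⟩)
  have hratio : 1 - (∫ s in (0:ℝ)..t, Real.exp (-α (pathIota T π s))) /
      (∫ s in (0:ℝ)..T, Real.exp (-α (pathIota T π s)))
      = (∫ s in (0:ℝ)..(T-t), f s) / (∫ s in (0:ℝ)..T, f s) := by
    rw [h1 t ht (le_of_lt htT), h1 T (le_of_lt hT) le_rfl]
    rw [sub_self, mul_div_mul_left _ _ (ne_of_gt (Real.exp_pos _))]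
    field_simp
    linarith [hsplit]
  simp only [pathLowInf, pathHighT]
  rw [hratio, Real.log_div (ne_of_gt hposTt) (ne_of_gt hposT), sub_smul]
  simp only [hf, pathIota]
  abel
end

section
/- Iterated-integral identity in the A₂ path model: let π ∈ C₀([0,T],V), set I₁ = ∫₀^T e^{−α₁(π(s))} ds and t₁ = 1/I₁, define η₁(u) = π(u) + log(1 − (∫₀^u e^{−α₁(π(s))} ds)/I₁)·α₁^∨ for 0 ≤ u < T; then I₂ := ∫₀^T e^{−α₂(η₁(s))} ds is finite, and with t₂ = 1/I₂ and η₂(u) = η₁(u) + log(1 − (∫₀^u e^{−α₂(η₁(s))} ds)/I₂)·α₂^∨ for 0 ≤ u < T, the integral I₃ := ∫₀^T e^{−α₁(η₂(s))} ds is finite and ∫₀^T e^{−α₂(π(s))} ds = 1/t₂ + t₁·I₃/t₂; equivalently, with t₃ = 1/I₃, ∫₀^T e^{−α₂(π(s))} ds = 1/t₂ + t₁/(t₂·t₃). -/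
open MeasureTheory Set

private lemma intervalIntegrable_congr_ae' {f g : ℝ → ℝ} {a b : ℝ}
    (hf : IntervalIntegrable f volume a b)
    (h : ∀ᵐ x ∂(volume : Measure ℝ), x ∈ Set.uIoc a b → f x = g x) :
    IntervalIntegrable g volume a b := by
  rw [intervalIntegrable_iff] at hf ⊢
  exact hf.congr ((ae_restrict_iff' measurableSet_uIoc).mpr
    (h.mono fun x hx hmem => (hx hmem)))

private lemma hasDerivAt_primitive' {f : ℝ → ℝ} (hf : Continuous f) (a u : ℝ) :
    HasDerivAt (fun x => ∫ t in a..x, f t) (f u) u :=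
  intervalIntegral.integral_hasDerivAt_right (hf.intervalIntegrable a u)
    (hf.stronglyMeasurableAtFilter _ _) hf.continuousAt

/-- Iterated-integral identity in the `A₂` geometric path model. -/
theorem a2_iterated_integral_identity
    {V : Type*} [NormedAddCommGroup V] [NormedSpace ℝ V] [FiniteDimensional ℝ V]
    (T : ℝ) (hT : 0 < T)
    (α₁ α₂ : V →ₗ[ℝ] ℝ) (α₁v α₂v : V)
    (h₁₁ : α₁ α₁v = 2) (h₂₂ : α₂ α₂v = 2) (h₁₂ : α₁ α₂v = -1) (h₂₁ : α₂ α₁v = -1)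
    (π : ℝ → V) (hπ : ContinuousOn π (Set.Icc 0 T)) (hπ0 : π 0 = 0)
    (I₁ t₁ : ℝ) (η₁ : ℝ → V) (I₂ t₂ : ℝ) (η₂ : ℝ → V) (I₃ t₃ : ℝ)
    (hI₁ : I₁ = ∫ s in (0:ℝ)..T, Real.exp (-α₁ (π s)))
    (ht₁ : t₁ = 1 / I₁)
    (hη₁ : ∀ u ∈ Set.Ico (0:ℝ) T,
      η₁ u = π u + Real.log (1 - (∫ s in (0:ℝ)..u, Real.exp (-α₁ (π s))) / I₁) • α₁v)
    (hI₂ : I₂ = ∫ s in (0:ℝ)..T, Real.exp (-α₂ (η₁ s)))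
    (ht₂ : t₂ = 1 / I₂)
    (hη₂ : ∀ u ∈ Set.Ico (0:ℝ) T,
      η₂ u = η₁ u + Real.log (1 - (∫ s in (0:ℝ)..u, Real.exp (-α₂ (η₁ s))) / I₂) • α₂v)
    (hI₃ : I₃ = ∫ s in (0:ℝ)..T, Real.exp (-α₁ (η₂ s)))
    (ht₃ : t₃ = 1 / I₃) :
    IntervalIntegrable (fun s => Real.exp (-α₂ (η₁ s))) volume 0 T ∧
    IntervalIntegrable (fun s => Real.exp (-α₁ (η₂ s))) volume 0 T ∧
    (∫ s in (0:ℝ)..T, Real.exp (-α₂ (π s))) = 1 / t₂ + t₁ * I₃ / t₂ ∧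
    (∫ s in (0:ℝ)..T, Real.exp (-α₂ (π s))) = 1 / t₂ + t₁ / (t₂ * t₃) := by
  have hT0 : (0:ℝ) ≤ T := hT.le
  have hUIcc : Set.uIcc (0:ℝ) T = Set.Icc 0 T := Set.uIcc_of_le hT0
  have hUIoc : Set.uIoc (0:ℝ) T = Set.Ioc 0 T := Set.uIoc_of_le hT0
  have haeT : ∀ᵐ x : ℝ, x ≠ T := by
    refine ae_iff.mpr ?_
    simpa using Real.volume_singleton
  -- clamp and continuous extension of π
  set c : ℝ → ℝ := fun t => max 0 (min t T) with hc
  have hc_mem : ∀ t, c t ∈ Set.Icc 0 T := fun t =>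
    ⟨le_max_left _ _, max_le hT0 (min_le_right _ _)⟩
  have hc_eq : ∀ t ∈ Set.Icc 0 T, c t = t := fun t ht => by
    simp [hc, min_eq_left ht.2, max_eq_right ht.1]
  have hc_cont : Continuous c := continuous_const.max (continuous_id.min continuous_const)
  set P : ℝ → V := fun t => π (c t) with hPdef
  have hP : Continuous P := hπ.comp_continuous hc_cont hc_mem
  have hPeq : ∀ t ∈ Set.Icc 0 T, P t = π t := fun t ht => by
    simp only [hPdef]; rw [hc_eq t ht]
  have hα₁c : Continuous fun v : V => α₁ v := α₁.continuous_of_finiteDimensional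
  have hα₂c : Continuous fun v : V => α₂ v := α₂.continuous_of_finiteDimensional
  set f : ℝ → ℝ := fun t => Real.exp (-α₁ (P t)) with hfdef
  set g : ℝ → ℝ := fun t => Real.exp (-α₂ (P t)) with hgdef
  have hf : Continuous f := Real.continuous_exp.comp (hα₁c.comp hP).neg
  have hg : Continuous g := Real.continuous_exp.comp (hα₂c.comp hP).neg
  have hfpos : ∀ t, 0 < f t := fun t => Real.exp_pos _
  have hgpos : ∀ t, 0 < g t := fun t => Real.exp_pos _
  -- I₁ in terms of f
  have hI₁' : I₁ = ∫ t in (0:ℝ)..T, f t := by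
    rw [hI₁]
    refine intervalIntegral.integral_congr fun t ht => ?_
    rw [hUIcc] at ht
    simp only [hfdef]
    rw [hPeq t ht]
  have hI₁pos : 0 < I₁ := by
    rw [hI₁']
    exact intervalIntegral.intervalIntegral_pos_of_pos (hf.intervalIntegrable 0 T) hfpos hT
  have hne₁ : (∫ t in (0:ℝ)..T, f t) ≠ 0 := by rw [← hI₁']; exact hI₁pos.ne'
  -- bounds for f, g
  obtain ⟨C₁, hC₁⟩ := isCompact_Icc.exists_bound_of_continuousOn
    ((hα₁c.comp hP).continuousOn : ContinuousOn (fun t => α₁ (P t)) (Set.Icc 0 T))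
  set mf : ℝ := Real.exp (-C₁) with hmfdef
  have hmf : 0 < mf := Real.exp_pos _
  have hmf_le : ∀ t ∈ Set.Icc 0 T, mf ≤ f t := by
    intro t ht
    have := hC₁ t ht
    simp only [Function.comp_apply, Real.norm_eq_abs] at this
    exact Real.exp_le_exp.mpr (by linarith [(abs_le.mp this).2])
  obtain ⟨Mg, hMg⟩ := isCompact_Icc.exists_bound_of_continuousOn
    (hg.continuousOn : ContinuousOn g (Set.Icc 0 T))
  have hMg' : ∀ t ∈ Set.Icc 0 T, g t ≤ Mg := fun t ht =>
    (le_abs_self _).trans (by simpa [Real.norm_eq_abs] using hMg t ht)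
  have hMg0 : 0 < Mg := lt_of_lt_of_le (hgpos 0) (hMg' 0 ⟨le_refl _, hT0⟩)
  obtain ⟨Mf, hMf⟩ := isCompact_Icc.exists_bound_of_continuousOn
    (hf.continuousOn : ContinuousOn f (Set.Icc 0 T))
  have hMf' : ∀ t ∈ Set.Icc 0 T, f t ≤ Mf := fun t ht =>
    (le_abs_self _).trans (by simpa [Real.norm_eq_abs] using hMf t ht)
  have hMf0 : 0 < Mf := lt_of_lt_of_le (hfpos 0) (hMf' 0 ⟨le_refl _, hT0⟩)
  -- the function A
  set A : ℝ → ℝ := fun u => (∫ t in (0:ℝ)..T, f t) - ∫ t in (0:ℝ)..u, f t with hAdef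
  have hA_deriv : ∀ u, HasDerivAt A (-(f u)) u := fun u =>
    (hasDerivAt_primitive' hf 0 u).const_sub _
  have hA_cont : Continuous A :=
    continuous_iff_continuousAt.mpr fun u => (hA_deriv u).continuousAt
  have hA_eq : ∀ u, A u = ∫ t in u..T, f t := by
    intro u
    simp only [hAdef]
    rw [eq_comm, eq_sub_iff_add_eq, add_comm]
    exact intervalIntegral.integral_add_adjacent_intervals
      (hf.intervalIntegrable 0 u) (hf.intervalIntegrable u T)
  have hApos : ∀ u, u < T → 0 < A u := fun u hu => by
    rw [hA_eq]
    exact intervalIntegral.intervalIntegral_pos_of_pos (hf.intervalIntegrable u T) hfpos hu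
  have hA0 : A 0 = I₁ := by
    simp only [hAdef]
    rw [intervalIntegral.integral_same, sub_zero, ← hI₁']
  have hA_nonneg : ∀ u, u ≤ T → 0 ≤ A u := fun u hu => by
    rw [hA_eq]
    exact intervalIntegral.integral_nonneg hu fun x _ => (hfpos x).le
  have hA_le_I₁ : ∀ u, 0 ≤ u → A u ≤ I₁ := by
    intro u hu
    have h0 : 0 ≤ ∫ t in (0:ℝ)..u, f t :=
      intervalIntegral.integral_nonneg hu fun x _ => (hfpos x).le
    have hr : A u = (∫ t in (0:ℝ)..T, f t) - ∫ t in (0:ℝ)..u, f t := rfl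
    rw [hr, hI₁']
    linarith
  have hA_mono : ∀ u v, u ≤ v → A v ≤ A u := by
    intro u v huv
    rw [hA_eq, hA_eq]
    have hadd : (∫ t in u..v, f t) + (∫ t in v..T, f t) = ∫ t in u..T, f t :=
      intervalIntegral.integral_add_adjacent_intervals
        (hf.intervalIntegrable u v) (hf.intervalIntegrable v T)
    have h0 : 0 ≤ ∫ t in u..v, f t :=
      intervalIntegral.integral_nonneg huv fun x _ => (hfpos x).le
    linarith
  have hA_lower : ∀ u ∈ Set.Icc 0 T, mf * (T - u) ≤ A u := by
    intro u hu
    rw [hA_eq]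
    have hconst : (∫ _ in u..T, (mf:ℝ)) = (T - u) * mf := by
      simp [smul_eq_mul]
    calc mf * (T - u) = ∫ _ in u..T, (mf:ℝ) := by rw [hconst]; ring
    _ ≤ ∫ t in u..T, f t :=
        intervalIntegral.integral_mono_on hu.2 intervalIntegrable_const
          (hf.intervalIntegrable u T) fun x hx => hmf_le x ⟨hu.1.trans hx.1, hx.2⟩
  -- the function h = density of I₂
  set h : ℝ → ℝ := fun u => g u * A u / I₁ with hhdef
  have hh : Continuous h := ((hg.mul hA_cont).div_const _)
  have hh_nonneg : ∀ u, u ≤ T → 0 ≤ h u := fun u hu =>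
    div_nonneg (mul_nonneg (hgpos u).le (hA_nonneg u hu)) hI₁pos.le
  -- η₁ formula
  have hη₁' : ∀ u ∈ Set.Ico (0:ℝ) T, Real.exp (-α₂ (η₁ u)) = h u := by
    intro u hu
    have hu0 : (0:ℝ) ≤ u := hu.1
    have huT : u < T := hu.2
    have hFeq : (∫ s in (0:ℝ)..u, Real.exp (-α₁ (π s))) = ∫ t in (0:ℝ)..u, f t := by
      refine intervalIntegral.integral_congr fun t ht => ?_
      rw [Set.uIcc_of_le hu0] at ht
      simp only [hfdef]
      rw [hPeq t ⟨ht.1, ht.2.trans huT.le⟩]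
    have h1 : 1 - (∫ s in (0:ℝ)..u, Real.exp (-α₁ (π s))) / I₁ = A u / I₁ := by
      have hr : A u = (∫ t in (0:ℝ)..T, f t) - ∫ t in (0:ℝ)..u, f t := rfl
      rw [hFeq, hr, hI₁']
      field_simp
    have hx : 0 < A u / I₁ := div_pos (hApos u huT) hI₁pos
    rw [hη₁ u hu, h1, map_add, _root_.map_smul, smul_eq_mul, h₂₁]
    have hπu : α₂ (π u) = α₂ (P u) := by rw [hPeq u ⟨hu0, huT.le⟩]
    rw [hπu, show -(α₂ (P u) + Real.log (A u / I₁) * (-1))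
        = Real.log (A u / I₁) + -α₂ (P u) by ring, Real.exp_add, Real.exp_log hx]
    simp only [hhdef, hgdef]
    ring
  -- integrability claim 1
  have haeIoc : ∀ᵐ x : ℝ, x ∈ Set.uIoc (0:ℝ) T → Real.exp (-α₂ (η₁ x)) = h x := by
    filter_upwards [haeT] with x hx hmem
    rw [hUIoc] at hmem
    exact hη₁' x ⟨hmem.1.le, hmem.2.lt_of_ne hx⟩
  have hInt1 : IntervalIntegrable (fun s => Real.exp (-α₂ (η₁ s))) volume 0 T :=
    intervalIntegrable_congr_ae' (hh.intervalIntegrable 0 T)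
      (haeIoc.mono fun x hx hmem => (hx hmem).symm)
  have hI₂' : I₂ = ∫ t in (0:ℝ)..T, h t := by
    rw [hI₂]
    exact intervalIntegral.integral_congr_ae haeIoc
  have hI₂pos : 0 < I₂ := by
    rw [hI₂']
    refine intervalIntegral.intervalIntegral_pos_of_pos_on (hh.intervalIntegrable 0 T)
      (fun x hx => ?_) hT
    exact div_pos (mul_pos (hgpos x) (hApos x hx.2)) hI₁pos
  -- the function B
  set B : ℝ → ℝ := fun u => (∫ t in (0:ℝ)..T, h t) - ∫ t in (0:ℝ)..u, h t with hBdef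
  have hB_deriv : ∀ u, HasDerivAt B (-(h u)) u := fun u =>
    (hasDerivAt_primitive' hh 0 u).const_sub _
  have hB_cont : Continuous B :=
    continuous_iff_continuousAt.mpr fun u => (hB_deriv u).continuousAt
  have hB_eq : ∀ u, B u = ∫ t in u..T, h t := by
    intro u
    simp only [hBdef]
    rw [eq_comm, eq_sub_iff_add_eq, add_comm]
    exact intervalIntegral.integral_add_adjacent_intervals
      (hh.intervalIntegrable 0 u) (hh.intervalIntegrable u T)
  have hB0 : B 0 = I₂ := by
    simp only [hBdef]
    rw [intervalIntegral.integral_same, sub_zero, ← hI₂']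
  have hBpos : ∀ u ∈ Set.Ico (0:ℝ) T, 0 < B u := by
    intro u hu
    rw [hB_eq]
    refine intervalIntegral.intervalIntegral_pos_of_pos_on (hh.intervalIntegrable u T)
      (fun x hx => ?_) hu.2
    exact div_pos (mul_pos (hgpos x) (hApos x hx.2)) hI₁pos
  have hB_nonneg : ∀ u, u ≤ T → 0 ≤ B u := by
    intro u hu
    rw [hB_eq]
    exact intervalIntegral.integral_nonneg hu fun x hx => hh_nonneg x hx.2
  have hB_upper : ∀ u ∈ Set.Icc 0 T, B u * I₁ ≤ Mg * A u * (T - u) := by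
    intro u hu
    have key : B u ≤ (T - u) * (Mg * A u / I₁) := by
      rw [hB_eq]
      calc (∫ t in u..T, h t) ≤ ∫ _ in u..T, Mg * A u / I₁ := by
            refine intervalIntegral.integral_mono_on hu.2 (hh.intervalIntegrable u T)
              intervalIntegrable_const fun x hx => ?_
            show g x * A x / I₁ ≤ Mg * A u / I₁
            have h1 : g x ≤ Mg := hMg' x ⟨hu.1.trans hx.1, hx.2⟩
            have h2 : A x ≤ A u := hA_mono u x hx.1
            have h3 : 0 ≤ A x := hA_nonneg x hx.2
            gcongr
      _ = (T - u) * (Mg * A u / I₁) := by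
            rw [intervalIntegral.integral_const, smul_eq_mul]
    rw [show (T - u) * (Mg * A u / I₁) = (T - u) * (Mg * A u) / I₁ from by ring,
      le_div_iff₀ hI₁pos] at key
    calc B u * I₁ ≤ (T - u) * (Mg * A u) := key
    _ = Mg * A u * (T - u) := by ring
  -- η₂ formula; φ is the explicit density of I₃
  set φ : ℝ → ℝ := fun u => f u * B u * I₁ ^ 2 / (A u ^ 2 * I₂) with hφdef
  have hη₂' : ∀ u ∈ Set.Ico (0:ℝ) T, Real.exp (-α₁ (η₂ u)) = φ u := by
    intro u hu
    have hu0 : (0:ℝ) ≤ u := hu.1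
    have huT : u < T := hu.2
    have hAu : A u ≠ 0 := (hApos u huT).ne'
    have hGeq : (∫ s in (0:ℝ)..u, Real.exp (-α₂ (η₁ s))) = ∫ t in (0:ℝ)..u, h t := by
      refine intervalIntegral.integral_congr fun t ht => ?_
      rw [Set.uIcc_of_le hu0] at ht
      exact hη₁' t ⟨ht.1, lt_of_le_of_lt ht.2 huT⟩
    have h1 : 1 - (∫ s in (0:ℝ)..u, Real.exp (-α₂ (η₁ s))) / I₂ = B u / I₂ := by
      have hr : B u = (∫ t in (0:ℝ)..T, h t) - ∫ t in (0:ℝ)..u, h t := rfl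
      have hne₂ : (∫ t in (0:ℝ)..T, h t) ≠ 0 := by rw [← hI₂']; exact hI₂pos.ne'
      rw [hGeq, hr, hI₂']
      field_simp
    have hFeq : (∫ s in (0:ℝ)..u, Real.exp (-α₁ (π s))) = ∫ t in (0:ℝ)..u, f t := by
      refine intervalIntegral.integral_congr fun t ht => ?_
      rw [Set.uIcc_of_le hu0] at ht
      simp only [hfdef]
      rw [hPeq t ⟨ht.1, ht.2.trans huT.le⟩]
    have h2 : 1 - (∫ s in (0:ℝ)..u, Real.exp (-α₁ (π s))) / I₁ = A u / I₁ := by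
      have hr : A u = (∫ t in (0:ℝ)..T, f t) - ∫ t in (0:ℝ)..u, f t := rfl
      rw [hFeq, hr, hI₁']
      field_simp
    have hxA : 0 < A u / I₁ := div_pos (hApos u huT) hI₁pos
    have hxB : 0 < B u / I₂ := div_pos (hBpos u hu) hI₂pos
    rw [hη₂ u hu, hη₁ u hu, h1, h2, map_add, map_add, _root_.map_smul, _root_.map_smul,
      smul_eq_mul, smul_eq_mul, h₁₁, h₁₂]
    have hπu : α₁ (π u) = α₁ (P u) := by rw [hPeq u ⟨hu0, huT.le⟩]
    rw [hπu, show -(α₁ (P u) + Real.log (A u / I₁) * 2 + Real.log (B u / I₂) * (-1))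
        = Real.log (B u / I₂) - Real.log (A u / I₁) - Real.log (A u / I₁) + -α₁ (P u) by ring,
      Real.exp_add, Real.exp_sub, Real.exp_sub, Real.exp_log hxA, Real.exp_log hxB]
    simp only [hφdef, hfdef]
    field_simp
  -- φ is measurable, nonneg on [0,T], bounded
  have hφ_meas : Measurable φ := by
    simp only [hφdef]
    exact (((hf.mul hB_cont).measurable).mul_const _).div
      (((hA_cont.pow 2).measurable).mul_const _)
  have hφ_nonneg : ∀ u, u ≤ T → 0 ≤ φ u := by
    intro u hu
    show 0 ≤ f u * B u * I₁ ^ 2 / (A u ^ 2 * I₂)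
    exact div_nonneg
      (mul_nonneg (mul_nonneg (hfpos u).le (hB_nonneg u hu)) (sq_nonneg _))
      (mul_nonneg (sq_nonneg _) hI₂pos.le)
  set C : ℝ := Mf * Mg * I₁ / (mf * I₂) with hCdef
  have hC0 : 0 ≤ C :=
    div_nonneg (mul_nonneg (mul_nonneg hMf0.le hMg0.le) hI₁pos.le)
      (mul_nonneg hmf.le hI₂pos.le)
  have hφ_bd : ∀ u ∈ Set.Icc 0 T, φ u ≤ C := by
    intro u hu
    rcases eq_or_lt_of_le hu.2 with rfl | huT
    · have hAT : A u = 0 := by rw [hA_eq]; simp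
      show f u * B u * I₁ ^ 2 / (A u ^ 2 * I₂) ≤ C
      rw [hAT]
      simpa using hC0
    · have hAu : 0 < A u := hApos u huT
      have hb := hB_upper u hu
      have hl := hA_lower u hu
      have hfu : f u ≤ Mf := hMf' u hu
      have hBu : 0 ≤ B u := hB_nonneg u hu.2
      have hTu : 0 ≤ T - u := by linarith [huT.le]
      show f u * B u * I₁ ^ 2 / (A u ^ 2 * I₂) ≤ Mf * Mg * I₁ / (mf * I₂)
      rw [div_le_div_iff₀ (mul_pos (pow_pos hAu 2) hI₂pos) (mul_pos hmf hI₂pos)]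
      have e1 : f u * (B u * I₁) ≤ Mf * (Mg * A u * (T - u)) :=
        mul_le_mul hfu hb (mul_nonneg hBu hI₁pos.le) hMf0.le
      calc f u * B u * I₁ ^ 2 * (mf * I₂)
          = (f u * (B u * I₁)) * (I₁ * mf * I₂) := by ring
        _ ≤ (Mf * (Mg * A u * (T - u))) * (I₁ * mf * I₂) :=
            mul_le_mul_of_nonneg_right e1
              (mul_nonneg (mul_nonneg hI₁pos.le hmf.le) hI₂pos.le)
        _ = Mf * Mg * A u * I₁ * I₂ * (mf * (T - u)) := by ring
        _ ≤ Mf * Mg * A u * I₁ * I₂ * A u :=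
            mul_le_mul_of_nonneg_left hl
              (by positivity)
        _ = Mf * Mg * I₁ * (A u ^ 2 * I₂) := by ring
  have hφ_int : IntervalIntegrable φ volume 0 T := by
    rw [intervalIntegrable_iff, hUIoc]
    refine Measure.integrableOn_of_bounded (M := C) (measure_Ioc_lt_top.ne)
      hφ_meas.aestronglyMeasurable ?_
    refine (ae_restrict_iff' measurableSet_Ioc).mpr (Filter.Eventually.of_forall fun x hx => ?_)
    rw [Real.norm_eq_abs, abs_of_nonneg (hφ_nonneg x hx.2)]
    exact hφ_bd x ⟨hx.1.le, hx.2⟩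
  -- integrability claim 2
  have haeIoc₂ : ∀ᵐ x : ℝ, x ∈ Set.uIoc (0:ℝ) T → Real.exp (-α₁ (η₂ x)) = φ x := by
    filter_upwards [haeT] with x hx hmem
    rw [hUIoc] at hmem
    exact hη₂' x ⟨hmem.1.le, hmem.2.lt_of_ne hx⟩
  have hInt2 : IntervalIntegrable (fun s => Real.exp (-α₁ (η₂ s))) volume 0 T :=
    intervalIntegrable_congr_ae' hφ_int (haeIoc₂.mono fun x hx hmem => (hx hmem).symm)
  have hI₃' : I₃ = ∫ t in (0:ℝ)..T, φ t := by
    rw [hI₃]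
    exact intervalIntegral.integral_congr_ae haeIoc₂
  have hI₃pos : 0 < I₃ := by
    rw [hI₃']
    refine intervalIntegral.intervalIntegral_pos_of_pos_on hφ_int (fun x hx => ?_) hT
    have hB := hBpos x ⟨hx.1.le, hx.2⟩
    have hA := hApos x hx.2
    exact div_pos (mul_pos (mul_pos (hfpos x) hB) (pow_pos hI₁pos 2))
      (mul_pos (pow_pos hA 2) hI₂pos)
  -- the combined integrand ψ and the potential H
  set ψ : ℝ → ℝ := fun u => g u - h u - (I₂ / I₁) * φ u with hψdef
  have hψ_int : IntervalIntegrable ψ volume 0 T :=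
    ((hg.intervalIntegrable 0 T).sub (hh.intervalIntegrable 0 T)).sub (hφ_int.const_mul _)
  set H : ℝ → ℝ := fun u => B u * (A u - I₁) / A u with hHdef
  have hH_deriv : ∀ u ∈ Set.Ico (0:ℝ) T, HasDerivAt H (ψ u) u := by
    intro u hu
    have hAu : A u ≠ 0 := (hApos u hu.2).ne'
    have hD : HasDerivAt (fun u => B u * (A u - I₁) / A u)
        (((-(h u) * (A u - I₁) + B u * -(f u)) * A u - B u * (A u - I₁) * -(f u)) / A u ^ 2) u :=
      ((hB_deriv u).mul ((hA_deriv u).sub_const I₁)).div (hA_deriv u) hAu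
    have hval : ψ u
        = ((-(h u) * (A u - I₁) + B u * -(f u)) * A u - B u * (A u - I₁) * -(f u)) / A u ^ 2 := by
      show g u - (g u * A u / I₁) - (I₂ / I₁) * (f u * B u * I₁ ^ 2 / (A u ^ 2 * I₂))
          = ((-(g u * A u / I₁) * (A u - I₁) + B u * -(f u)) * A u
              - B u * (A u - I₁) * -(f u)) / A u ^ 2
      field_simp
      ring
    rw [hval]
    exact hD
  have hH0 : H 0 = 0 := by
    show B 0 * (A 0 - I₁) / A 0 = 0
    rw [hA0]
    simp
  have hkey : ∀ u ∈ Set.Ico (0:ℝ) T, (∫ t in (0:ℝ)..u, ψ t) = H u := by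
    intro u hu
    have heq : (∫ t in (0:ℝ)..u, ψ t) = H u - H 0 := by
      refine intervalIntegral.integral_eq_sub_of_hasDerivAt (fun x hx => ?_) ?_
      · rw [Set.uIcc_of_le hu.1] at hx
        exact hH_deriv x ⟨hx.1, lt_of_le_of_lt hx.2 hu.2⟩
      · refine hψ_int.mono_set ?_
        rw [hUIcc, Set.uIcc_of_le hu.1]
        exact Set.Icc_subset_Icc le_rfl hu.2.le
    rw [heq, hH0, sub_zero]
  -- the approach filter
  have hne : (nhdsWithin T (Set.Ico 0 T)).NeBot := by
    refine mem_closure_iff_nhdsWithin_neBot.mp ?_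
    rw [closure_Ico hT.ne]
    exact ⟨hT0, le_refl T⟩
  -- H tends to 0 along 𝓝[Ico 0 T] T
  have hHlb : ∀ u ∈ Set.Ico (0:ℝ) T, -(Mg * (T - u)) ≤ H u := by
    intro u hu
    have hAu : 0 < A u := hApos u hu.2
    have hBu : 0 ≤ B u := hB_nonneg u hu.2.le
    have hAnn : 0 ≤ A u := hAu.le
    have hb := hB_upper u ⟨hu.1, hu.2.le⟩
    have hX : B u * (I₁ - A u) / A u ≤ Mg * (T - u) := by
      rw [div_le_iff₀ hAu]
      calc B u * (I₁ - A u) ≤ B u * I₁ :=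
            mul_le_mul_of_nonneg_left (sub_le_self _ hAnn) hBu
      _ ≤ Mg * A u * (T - u) := hb
      _ = Mg * (T - u) * A u := by ring
    have hHeq : H u = -(B u * (I₁ - A u) / A u) := by
      show B u * (A u - I₁) / A u = -(B u * (I₁ - A u) / A u)
      ring
    rw [hHeq]
    linarith
  have hHub : ∀ u ∈ Set.Ico (0:ℝ) T, H u ≤ Mg * (T - u) := by
    intro u hu
    have hAu : 0 < A u := hApos u hu.2
    have hBu : 0 ≤ B u := hB_nonneg u hu.2.le
    have hH0' : H u ≤ 0 := by
      show B u * (A u - I₁) / A u ≤ 0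
      apply div_nonpos_of_nonpos_of_nonneg _ hAu.le
      exact mul_nonpos_of_nonneg_of_nonpos hBu (by linarith [hA_le_I₁ u hu.1])
    have : (0:ℝ) ≤ Mg * (T - u) := mul_nonneg hMg0.le (by linarith [hu.2.le])
    linarith
  have hbnd_tendsto : Filter.Tendsto (fun u => Mg * (T - u))
      (nhdsWithin T (Set.Ico 0 T)) (nhds 0) := by
    have hc' : Filter.Tendsto (fun u : ℝ => Mg * (T - u)) (nhds T) (nhds (Mg * (T - T))) :=
      ((continuous_const.mul (continuous_const.sub continuous_id)).tendsto T)
    have h2 : Filter.Tendsto (fun u : ℝ => Mg * (T - u))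
        (nhdsWithin T (Set.Ico 0 T)) (nhds (Mg * (T - T))) :=
      hc'.mono_left nhdsWithin_le_nhds
    simpa using h2
  have hbnd_tendsto' : Filter.Tendsto (fun u => -(Mg * (T - u)))
      (nhdsWithin T (Set.Ico 0 T)) (nhds 0) := by
    simpa using hbnd_tendsto.neg
  have hH_tendsto : Filter.Tendsto H (nhdsWithin T (Set.Ico 0 T)) (nhds 0) := by
    refine tendsto_of_tendsto_of_tendsto_of_le_of_le' hbnd_tendsto' hbnd_tendsto ?_ ?_
    · exact eventually_mem_nhdsWithin.mono fun u hu => hHlb u hu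
    · exact eventually_mem_nhdsWithin.mono fun u hu => hHub u hu
  -- the primitive of ψ tends to the full integral
  have hprim : Filter.Tendsto (fun u => ∫ t in (0:ℝ)..u, ψ t)
      (nhdsWithin T (Set.Ico 0 T)) (nhds (∫ t in (0:ℝ)..T, ψ t)) := by
    have hcontOn : ContinuousOn (fun u => ∫ t in (0:ℝ)..u, ψ t) (Set.uIcc 0 T) :=
      intervalIntegral.continuousOn_primitive_interval' hψ_int Set.left_mem_uIcc
    have hcw : ContinuousWithinAt (fun u => ∫ t in (0:ℝ)..u, ψ t) (Set.uIcc 0 T) T :=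
      hcontOn T Set.right_mem_uIcc
    exact hcw.tendsto.mono_left (nhdsWithin_mono T (by rw [hUIcc]; exact Set.Ico_subset_Icc_self))
  have hzero : (∫ t in (0:ℝ)..T, ψ t) = 0 := by
    refine tendsto_nhds_unique hprim ?_
    refine hH_tendsto.congr' ?_
    exact eventually_mem_nhdsWithin.mono fun u hu => (hkey u hu).symm
  -- split the integral
  have hsplit : (∫ t in (0:ℝ)..T, ψ t)
      = (∫ t in (0:ℝ)..T, g t) - (∫ t in (0:ℝ)..T, h t)
        - (I₂ / I₁) * ∫ t in (0:ℝ)..T, φ t := by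
    simp only [hψdef]
    rw [intervalIntegral.integral_sub
        ((hg.intervalIntegrable 0 T).sub (hh.intervalIntegrable 0 T)) (hφ_int.const_mul _),
      intervalIntegral.integral_sub (hg.intervalIntegrable 0 T) (hh.intervalIntegrable 0 T),
      intervalIntegral.integral_const_mul]
  have hgeq : (∫ s in (0:ℝ)..T, Real.exp (-α₂ (π s))) = ∫ t in (0:ℝ)..T, g t := by
    refine intervalIntegral.integral_congr fun t ht => ?_
    rw [hUIcc] at ht
    simp only [hgdef]
    rw [hPeq t ht]
  have hmain : (∫ s in (0:ℝ)..T, Real.exp (-α₂ (π s))) = I₂ + I₂ / I₁ * I₃ := by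
    rw [hgeq]
    rw [hsplit, ← hI₂', ← hI₃'] at hzero
    linarith
  refine ⟨hInt1, hInt2, ?_, ?_⟩
  · rw [hmain, ht₁, ht₂]
    field_simp
  · rw [hmain, ht₁, ht₂, ht₃]
    field_simp
    try ring
end

section
/- Lattice-cone lower bound for Laurent polynomials with positive coefficients: let m ≥ 1, k ≥ 1 and a₁,…,a_k ∈ ℤ^m be such that {Σ_{i=1}^k λ_i·a_i − μ : λ_i ≥ 0, μ ∈ [0,∞)^m} = ℝ^m. Then (a) there exist natural numbers n₁,…,n_k such that the vector v = Σ_i n_i·a_i has all coordinates ≥ 1; and (b) for any integers c_i ≥ 1, setting L(t) = Σ_{i=1}^k c_i·Π_{j=1}^m t_j^{−a_{i,j}} and N = Σ_i n_i, one has L(t)^N ≥ Π_{j=1}^m t_j^{−v_j} for all t ∈ (0,∞)^m; in particular there exist positive rationals ν₁,…,ν_m with L(t) ≥ Π_{j=1}^m t_j^{−ν_j} for all t ∈ (0,∞)^m. -/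
/-!
Applying the cone hypothesis to `v = (1, …, 1)` gives real weights `λᵢ ≥ 0` with
`∑ᵢ λᵢ aᵢ ≥ 1` coordinatewise; scaling by `D > ∑ᵢⱼ |aᵢⱼ|` and rounding up keeps every
coordinate of `∑ᵢ nᵢ aᵢ` positive, hence `≥ 1` since it is an integer. Expanding `L(t)^N`
and keeping only the single term `∏ᵢ (t^{-aᵢ})^{nᵢ} = t^{-v}` gives (b), and taking `N`-th
roots gives the exponents `νⱼ = vⱼ / N`.
-/

open Finset

theorem zpow_sum₀ {ι G : Type*} [CommGroupWithZero G] {x : G} (hx : x ≠ 0) (s : Finset ι)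
    (f : ι → ℤ) : x ^ (∑ i ∈ s, f i) = ∏ i ∈ s, x ^ f i := by
  classical
  induction s using Finset.induction_on with
  | empty => simp
  | insert _ _ hi ih => rw [sum_insert hi, prod_insert hi, zpow_add₀ hx, ih]

theorem mul_sub_abs_le_natCeil_mul {x : ℝ} (hx : 0 ≤ x) (b : ℝ) :
    x * b - |b| ≤ ⌈x⌉₊ * b := by
  have h₀ : x ≤ ⌈x⌉₊ := Nat.le_ceil x
  have h₁ : (⌈x⌉₊ : ℝ) < x + 1 := Nat.ceil_lt_add_one hx
  have : |(⌈x⌉₊ - x) * b| ≤ |b| := by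
    rw [abs_mul]
    exact mul_le_of_le_one_left (abs_nonneg b) (abs_le.mpr ⟨by linarith, by linarith⟩)
  linarith [neg_abs_le ((⌈x⌉₊ - x) * b)]

theorem exists_nat_sum_mul_ge_one {ι κ : Type*} [Fintype ι] [Fintype κ] (a : ι → κ → ℤ)
    (lam : ι → ℝ) (hlam : ∀ i, 0 ≤ lam i) (hsum : ∀ j, 1 ≤ ∑ i, lam i * a i j) :
    ∃ n : ι → ℕ, ∀ j, 1 ≤ ∑ i, (n i : ℤ) * a i j := by
  set D : ℝ := ∑ i, ∑ j, |(a i j : ℝ)| + 1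
  have hD0 : 0 ≤ D := by positivity
  refine ⟨fun i => ⌈lam i * D⌉₊, fun j => ?_⟩
  have hD : ∑ i, |(a i j : ℝ)| < D := by
    have := sum_le_sum fun i (_ : i ∈ univ) =>
      single_le_sum (fun j _ => abs_nonneg (a i j : ℝ)) (mem_univ j)
    linarith
  have hround : D * ∑ i, lam i * a i j - ∑ i, |(a i j : ℝ)| ≤
      ∑ i, (⌈lam i * D⌉₊ : ℝ) * a i j := by
    rw [mul_sum, ← sum_sub_distrib]
    refine sum_le_sum fun i _ => ?_
    have := mul_sub_abs_le_natCeil_mul (mul_nonneg (hlam i) hD0) (a i j)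
    linarith
  have hscale : D ≤ D * ∑ i, lam i * a i j := le_mul_of_one_le_right hD0 (hsum j)
  have hpos : (0 : ℝ) < ∑ i, (⌈lam i * D⌉₊ : ℝ) * a i j := by linarith
  exact Order.one_le_iff_pos.mpr (by exact_mod_cast hpos)

theorem prod_pow_le_sum_pow_sum {ι R : Type*} [Fintype ι] [CommSemiring R] [PartialOrder R]
    [IsOrderedRing R] {P : ι → R} (hP : ∀ i, 0 ≤ P i) (n : ι → ℕ) :
    ∏ i, P i ^ n i ≤ (∑ i, P i) ^ ∑ i, n i := by
  rw [← prod_pow_eq_pow_sum]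
  exact prod_le_prod (fun i _ => pow_nonneg (hP i) _)
    fun i _ => pow_le_pow_left₀ (hP i) (single_le_sum (fun i _ => hP i) (mem_univ i)) _

theorem prod_zpow_neg_sum_mul {ι κ G : Type*} [Fintype ι] [Fintype κ] [CommGroupWithZero G]
    {t : κ → G}
    (ht : ∀ j, t j ≠ 0) (a : ι → κ → ℤ) (n : ι → ℕ) :
    ∏ j, t j ^ (-(∑ i, (n i : ℤ) * a i j)) = ∏ i, (∏ j, t j ^ (-(a i j))) ^ n i := by
  simp_rw [← prod_pow, ← zpow_natCast, ← zpow_mul]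
  rw [prod_comm]
  refine prod_congr rfl fun j _ => ?_
  rw [← zpow_sum₀ (ht j), ← sum_neg_distrib]
  congr 1
  exact sum_congr rfl fun i _ => by ring

theorem prod_zpow_le_laurent_pow {ι κ : Type*} [Fintype ι] [Fintype κ] (a : ι → κ → ℤ)
    {c : ι → ℤ} (hc : ∀ i, 1 ≤ c i) (n : ι → ℕ) {t : κ → ℝ} (ht : ∀ j, 0 < t j) :
    ∏ j, t j ^ (-(∑ i, (n i : ℤ) * a i j)) ≤
      (∑ i, (c i : ℝ) * ∏ j, t j ^ (-(a i j))) ^ ∑ i, n i := by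
  have hP : ∀ i, 0 ≤ ∏ j, t j ^ (-(a i j)) := fun i =>
    prod_nonneg fun j _ => (zpow_pos (ht j) _).le
  have hcP : ∑ i, ∏ j, t j ^ (-(a i j)) ≤ ∑ i, (c i : ℝ) * ∏ j, t j ^ (-(a i j)) :=
    sum_le_sum fun i _ => le_mul_of_one_le_left (hP i) (by exact_mod_cast hc i)
  rw [prod_zpow_neg_sum_mul (fun j => (ht j).ne') a n]
  exact (prod_pow_le_sum_pow_sum hP n).trans
    (pow_le_pow_left₀ (sum_nonneg fun i _ => hP i) hcP _)

theorem prod_rpow_le_of_prod_zpow_le_pow {κ : Type*} [Fintype κ] {t : κ → ℝ}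
    (ht : ∀ j, 0 < t j) (v : κ → ℤ) {N : ℕ} (hN : N ≠ 0) {L : ℝ} (hL : 0 ≤ L)
    (h : ∏ j, t j ^ (-(v j)) ≤ L ^ N) :
    ∏ j, t j ^ (-((v j / N : ℚ) : ℝ)) ≤ L := by
  refine le_of_pow_le_pow_left₀ hN hL (Eq.trans_le ?_ h)
  rw [← prod_pow]
  refine prod_congr rfl fun j _ => ?_
  rw [← Real.rpow_natCast, ← Real.rpow_mul (ht j).le, ← Real.rpow_intCast]
  congr 1
  push_cast
  field_simp

theorem laurent_lattice_cone_bound_general (m k : ℕ) (hm : 1 ≤ m)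
    (a : Fin k → Fin m → ℤ)
    (hcone : ∀ v : Fin m → ℝ, ∃ (lam : Fin k → ℝ) (mu : Fin m → ℝ),
      (∀ i, 0 ≤ lam i) ∧ (∀ j, 0 ≤ mu j) ∧
      ∀ j, v j = (∑ i, lam i * (a i j : ℝ)) - mu j)
    (c : Fin k → ℤ) (hc : ∀ i, 1 ≤ c i) :
    ∃ n : Fin k → ℕ,
      (∀ j, 1 ≤ ∑ i, (n i : ℤ) * a i j) ∧
      (∀ t : Fin m → ℝ, (∀ j, 0 < t j) →
        (∑ i, (c i : ℝ) * ∏ j, t j ^ (-(a i j))) ^ (∑ i, n i) ≥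
          ∏ j, t j ^ (-(∑ i, (n i : ℤ) * a i j))) ∧
      ∃ ν : Fin m → ℚ, (∀ j, 0 < ν j) ∧
        ∀ t : Fin m → ℝ, (∀ j, 0 < t j) →
          (∑ i, (c i : ℝ) * ∏ j, t j ^ (-(a i j))) ≥ ∏ j, t j ^ (-(ν j : ℝ)) := by
  obtain ⟨lam, mu, hlam, hmu, hv⟩ := hcone 1
  obtain ⟨n, hn⟩ := exists_nat_sum_mul_ge_one a lam hlam fun j => by
    linarith [hv j, hmu j, show (1 : Fin m → ℝ) j = 1 from rfl]
  have hN : ∑ i, n i ≠ 0 := fun h => by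
    have hn0 : ∀ i, n i = 0 := fun i => sum_eq_zero_iff.mp h i (mem_univ i)
    simpa [hn0] using hn ⟨0, hm⟩
  refine ⟨n, hn, fun t ht => prod_zpow_le_laurent_pow a hc n ht,
    fun j => (∑ i, (n i : ℤ) * a i j : ℤ) / (∑ i, n i : ℕ), fun j => ?_, fun t ht => ?_⟩
  · have := hn j
    positivity
  · have hL : 0 ≤ ∑ i, (c i : ℝ) * ∏ j, t j ^ (-(a i j)) := sum_nonneg fun i _ =>
      mul_nonneg (by exact_mod_cast zero_le_one.trans (hc i))
        (prod_nonneg fun j _ => (zpow_pos (ht j) _).le)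
    exact prod_rpow_le_of_prod_zpow_le_pow ht _ hN hL (prod_zpow_le_laurent_pow a hc n ht)

/-- Lattice-cone lower bound for Laurent polynomials with positive coefficients. -/
theorem laurent_lattice_cone_bound (m k : ℕ) (hm : 1 ≤ m) (hk : 1 ≤ k)
    (a : Fin k → Fin m → ℤ)
    (hcone : ∀ v : Fin m → ℝ, ∃ (lam : Fin k → ℝ) (mu : Fin m → ℝ),
      (∀ i, 0 ≤ lam i) ∧ (∀ j, 0 ≤ mu j) ∧
      ∀ j, v j = (∑ i, lam i * (a i j : ℝ)) - mu j)
    (c : Fin k → ℤ) (hc : ∀ i, 1 ≤ c i) :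
    ∃ n : Fin k → ℕ,
      (∀ j, 1 ≤ ∑ i, (n i : ℤ) * a i j) ∧
      (∀ t : Fin m → ℝ, (∀ j, 0 < t j) →
        (∑ i, (c i : ℝ) * ∏ j, t j ^ (-(a i j))) ^ (∑ i, n i) ≥
          ∏ j, t j ^ (-(∑ i, (n i : ℤ) * a i j))) ∧
      ∃ ν : Fin m → ℚ, (∀ j, 0 < ν j) ∧
        ∀ t : Fin m → ℝ, (∀ j, 0 < t j) →
          (∑ i, (c i : ℝ) * ∏ j, t j ^ (-(a i j))) ≥ ∏ j, t j ^ (-(ν j : ℝ)) :=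
  laurent_lattice_cone_bound_general m k hm a hcone c hc
end

section
/- Crystallization (q → 0 limit) of the q-Littelmann operators: let π ∈ C₀([0,T],V), α a linear form on V, α^∨ ∈ V with α(α^∨) = 2, and c ∈ ℝ. Then (a) lim_{q→0⁺} q·log ∫₀^T e^{−α(π(s))/q} ds = −inf_{0≤s≤T} α(π(s)); and (b) for every t with 0 < t < T, the path (e_{α,q}^c·π)(t) = π(t) + q·log(1 + ((e^{c/q} − 1)/∫₀^T e^{−α(π(s))/q} ds)·∫₀^t e^{−α(π(s))/q} ds)·α^∨ converges as q → 0⁺ to π(t) + (inf_{0≤s≤T} α(π(s)) − min(inf_{0≤s≤t} α(π(s)) − c, inf_{t≤s≤T} α(π(s))))·α^∨. -/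
/-!
Everything reduces to the Laplace principle `q log ∫_a^b e^{-f/q} → -min_{[a,b]} f` for
continuous `f`: the integral is at most `(b - a) e^{-min f / q}`, and at least the contribution
`(v - u) e^{-M / q}` of a short interval `[u, v]` near a minimiser on which `f ≤ M`, for any
`M > min f`. For the operator, splitting `∫_0^T = ∫_0^t + ∫_t^T` turns the argument of the
logarithm into `(∫_t^T + e^{c/q} ∫_0^t) / ∫_0^T`, and `q log (X + Y)` tends to the larger of
the limits of `q log X` and `q log Y` because `max X Y ≤ X + Y ≤ 2 max X Y`.
-/

open MeasureTheory Filter Topology Set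

-- `open Real` stays local: its notation `π` would shadow the path in the main theorem.
section

open Real

lemma ContinuousOn.exists_Icc_subset_forall_lt {f : ℝ → ℝ} {a b x₀ M : ℝ}
    (hf : ContinuousOn f (Icc a b)) (hab : a < b) (hx₀ : x₀ ∈ Icc a b) (hM : f x₀ < M) :
    ∃ u v, a ≤ u ∧ u < v ∧ v ≤ b ∧ ∀ s ∈ Icc u v, f s < M := by
  obtain ⟨ε, hε, hball⟩ := Metric.mem_nhdsWithin_iff.1 (hf x₀ hx₀ (Iio_mem_nhds hM))
  refine ⟨max a (x₀ - ε / 2), min b (x₀ + ε / 2), le_max_left _ _, ?_, min_le_left _ _,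
    fun s hs => hball ⟨?_, ?_⟩⟩
  · apply max_lt <;> apply lt_min <;> linarith [hx₀.1, hx₀.2]
  · have h₁ := (le_max_right _ _).trans hs.1
    have h₂ := hs.2.trans (min_le_right _ _)
    rw [Metric.mem_ball, Real.dist_eq, abs_lt]
    constructor <;> linarith
  · exact ⟨(le_max_left _ _).trans hs.1, hs.2.trans (min_le_left _ _)⟩

lemma tendsto_mul_log_const (C : ℝ) :
    Tendsto (fun q : ℝ => q * log C) (𝓝[>] 0) (𝓝 0) := by
  simpa using ((continuous_mul_const (log C)).tendsto 0).mono_left nhdsWithin_le_nhds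

section Laplace

variable {f : ℝ → ℝ} {a b q : ℝ}

lemma intervalIntegrable_exp_neg_div (hab : a ≤ b) (hf : ContinuousOn f (Icc a b)) :
    IntervalIntegrable (fun s => exp (-f s / q)) volume a b :=
  (continuous_exp.comp_continuousOn (hf.neg.div_const q)).intervalIntegrable_of_Icc hab

lemma integral_exp_neg_div_pos (hab : a < b) (hf : ContinuousOn f (Icc a b)) :
    0 < ∫ s in a..b, exp (-f s / q) :=
  intervalIntegral.intervalIntegral_pos_of_pos_on (intervalIntegrable_exp_neg_div hab.le hf)
    (fun _ _ => exp_pos _) hab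

lemma mul_log_mul_exp_neg_div {x m : ℝ} (hq : q ≠ 0) (hx : 0 < x) :
    q * log (x * exp (-m / q)) = q * log x - m := by
  rw [log_mul hx.ne' (exp_ne_zero _), log_exp]
  field_simp
  ring

lemma mul_log_integral_exp_neg_div_le {m : ℝ} (hq : 0 < q) (hab : a < b)
    (hf : ContinuousOn f (Icc a b)) (hm : ∀ s ∈ Icc a b, m ≤ f s) :
    q * log (∫ s in a..b, exp (-f s / q)) ≤ q * log (b - a) - m := by
  have hle : ∫ s in a..b, exp (-f s / q) ≤ (b - a) * exp (-m / q) := by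
    simpa using intervalIntegral.integral_mono_on hab.le
      (intervalIntegrable_exp_neg_div hab.le hf) intervalIntegrable_const
      fun s hs => exp_le_exp.2 (div_le_div_of_nonneg_right (neg_le_neg (hm s hs)) hq.le)
  rw [← mul_log_mul_exp_neg_div hq.ne' (sub_pos.2 hab)]
  exact mul_le_mul_of_nonneg_left (log_le_log (integral_exp_neg_div_pos hab hf) hle) hq.le

lemma le_mul_log_integral_exp_neg_div {u v M : ℝ} (hq : 0 < q) (hau : a ≤ u) (huv : u < v)
    (hvb : v ≤ b) (hf : ContinuousOn f (Icc a b)) (hM : ∀ s ∈ Icc u v, f s ≤ M) :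
    q * log (v - u) - M ≤ q * log (∫ s in a..b, exp (-f s / q)) := by
  have hle : (v - u) * exp (-M / q) ≤ ∫ s in u..v, exp (-f s / q) := by
    simpa using intervalIntegral.integral_mono_on huv.le intervalIntegrable_const
      (intervalIntegrable_exp_neg_div huv.le (hf.mono (Icc_subset_Icc hau hvb)))
      fun s hs => exp_le_exp.2 (div_le_div_of_nonneg_right (neg_le_neg (hM s hs)) hq.le)
  have hsub : ∫ s in u..v, exp (-f s / q) ≤ ∫ s in a..b, exp (-f s / q) :=
    intervalIntegral.integral_mono_interval hau huv.le hvb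
      (ae_of_all _ fun _ => (exp_pos _).le)
      (intervalIntegrable_exp_neg_div (hau.trans (huv.le.trans hvb)) hf)
  rw [← mul_log_mul_exp_neg_div hq.ne' (sub_pos.2 huv)]
  exact mul_le_mul_of_nonneg_left
    (log_le_log (mul_pos (sub_pos.2 huv) (exp_pos _)) (hle.trans hsub)) hq.le

theorem tendsto_mul_log_integral_exp_neg_div (hab : a < b) (hf : ContinuousOn f (Icc a b)) :
    Tendsto (fun q : ℝ => q * log (∫ s in a..b, exp (-f s / q)))
      (𝓝[>] 0) (𝓝 (-sInf (f '' Icc a b))) := by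
  obtain ⟨x₀, hx₀, hinf, hmin⟩ :=
    isCompact_Icc.exists_sInf_image_eq_and_le (nonempty_Icc.2 hab.le) hf
  rw [hinf, tendsto_order]
  refine ⟨fun l hl => ?_, fun w hw => ?_⟩
  · obtain ⟨u, v, hau, huv, hvb, hM⟩ :=
      hf.exists_Icc_subset_forall_lt hab hx₀ (show f x₀ < (f x₀ - l) / 2 by linarith)
    have hlim := (tendsto_mul_log_const (v - u)).sub_const ((f x₀ - l) / 2)
    rw [zero_sub] at hlim
    filter_upwards [self_mem_nhdsWithin,
      hlim.eventually_const_lt (show l < -((f x₀ - l) / 2) by linarith)]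
      with q hq hlt
    exact hlt.trans_le
      (le_mul_log_integral_exp_neg_div hq hau huv hvb hf fun s hs => (hM s hs).le)
  · have hlim := (tendsto_mul_log_const (b - a)).sub_const (f x₀)
    rw [zero_sub] at hlim
    filter_upwards [self_mem_nhdsWithin, hlim.eventually_lt_const hw] with q hq hlt
    exact (mul_log_integral_exp_neg_div_le hq hab hf hmin).trans_lt hlt

end Laplace

theorem tendsto_mul_log_add {X Y : ℝ → ℝ} {L₁ L₂ : ℝ}
    (hX : ∀ q > 0, 0 < X q) (hY : ∀ q > 0, 0 < Y q)
    (h₁ : Tendsto (fun q => q * log (X q)) (𝓝[>] 0) (𝓝 L₁))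
    (h₂ : Tendsto (fun q => q * log (Y q)) (𝓝[>] 0) (𝓝 L₂)) :
    Tendsto (fun q => q * log (X q + Y q)) (𝓝[>] 0) (𝓝 (max L₁ L₂)) := by
  have hlo := h₁.max h₂
  have hhi := (tendsto_mul_log_const 2).add hlo
  rw [zero_add] at hhi
  refine tendsto_of_tendsto_of_tendsto_of_le_of_le' hlo hhi ?_ ?_ <;>
    filter_upwards [self_mem_nhdsWithin] with q (hq : 0 < q)
  · exact max_le
      (mul_le_mul_of_nonneg_left (log_le_log (hX q hq) (by linarith [hY q hq])) hq.le)
      (mul_le_mul_of_nonneg_left (log_le_log (hY q hq) (by linarith [hX q hq])) hq.le)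
  · have hmax : q * log (max (X q) (Y q)) ≤ max (q * log (X q)) (q * log (Y q)) := by
      rcases max_choice (X q) (Y q) with h | h <;> rw [h]
      exacts [le_max_left _ _, le_max_right _ _]
    calc q * log (X q + Y q) ≤ q * log (2 * max (X q) (Y q)) :=
          mul_le_mul_of_nonneg_left (log_le_log (by linarith [hX q hq, hY q hq])
            (by linarith [le_max_left (X q) (Y q), le_max_right (X q) (Y q)])) hq.le
      _ = q * log 2 + q * log (max (X q) (Y q)) := by
          rw [log_mul two_ne_zero (lt_max_of_lt_left (hX q hq)).ne', mul_add]
      _ ≤ q * log 2 + max (q * log (X q)) (q * log (Y q)) := by gcongr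

lemma one_add_div_mul_eq {A B E : ℝ} (h : A + B ≠ 0) :
    1 + (E - 1) / (A + B) * A = (B + E * A) / (A + B) := by
  field_simp
  ring

theorem tendsto_mul_log_one_add_div_mul {f : ℝ → ℝ} {a t b : ℝ} (hat : a < t) (htb : t < b)
    (hf : ContinuousOn f (Icc a b)) (c : ℝ) :
    Tendsto (fun q : ℝ => q * log (1 + ((exp (c / q) - 1) /
        ∫ s in a..b, exp (-f s / q)) * ∫ s in a..t, exp (-f s / q)))
      (𝓝[>] 0) (𝓝 (sInf (f '' Icc a b) -
        min (sInf (f '' Icc a t) - c) (sInf (f '' Icc t b)))) := by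
  have hfl : ContinuousOn f (Icc a t) := hf.mono (Icc_subset_Icc le_rfl htb.le)
  have hfr : ContinuousOn f (Icc t b) := hf.mono (Icc_subset_Icc hat.le le_rfl)
  have hleft : Tendsto (fun q : ℝ => q * log (exp (c / q) * ∫ s in a..t, exp (-f s / q)))
      (𝓝[>] 0) (𝓝 (c + -sInf (f '' Icc a t))) := by
    refine (tendsto_const_nhds.add (tendsto_mul_log_integral_exp_neg_div hat hfl)).congr' ?_
    filter_upwards [self_mem_nhdsWithin] with q (hq : 0 < q)
    rw [log_mul (exp_ne_zero _) (integral_exp_neg_div_pos hat hfl).ne', log_exp, mul_add,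
      mul_div_cancel₀ _ hq.ne']
  have hsum := tendsto_mul_log_add (fun _ _ => integral_exp_neg_div_pos htb hfr)
    (fun _ _ => mul_pos (exp_pos _) (integral_exp_neg_div_pos hat hfl))
    (tendsto_mul_log_integral_exp_neg_div htb hfr) hleft
  have hlim := hsum.sub (tendsto_mul_log_integral_exp_neg_div (hat.trans htb) hf)
  convert hlim.congr' ?_ using 2
  · rw [show c + -sInf (f '' Icc a t) = -(sInf (f '' Icc a t) - c) by ring, max_neg_neg,
      min_comm]
    ring
  filter_upwards [self_mem_nhdsWithin] with q (hq : 0 < q)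
  have hsplit := intervalIntegral.integral_add_adjacent_intervals
    (intervalIntegrable_exp_neg_div (q := q) hat.le hfl) (intervalIntegrable_exp_neg_div htb.le hfr)
  have hpos := integral_exp_neg_div_pos (q := q) (hat.trans htb) hf
  rw [← hsplit] at hpos ⊢
  rw [one_add_div_mul_eq hpos.ne', log_div _ hpos.ne', mul_sub]
  exact (add_pos (integral_exp_neg_div_pos htb hfr)
    (mul_pos (exp_pos _) (integral_exp_neg_div_pos hat hfl))).ne'

end

theorem crystallization_of_q_littelmann_general
    {V : Type*} [NormedAddCommGroup V] [NormedSpace ℝ V] [FiniteDimensional ℝ V]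
    (T : ℝ) (hT : 0 < T)
    (α : V →ₗ[ℝ] ℝ) (αv : V)
    (π : ℝ → V) (hπ : ContinuousOn π (Set.Icc 0 T))
    (c : ℝ) :
    Tendsto (fun q : ℝ => q * Real.log (∫ s in (0:ℝ)..T, Real.exp (-α (π s) / q)))
      (𝓝[>] 0) (𝓝 (-sInf ((fun s => α (π s)) '' Set.Icc 0 T))) ∧
    ∀ t : ℝ, 0 < t → t < T →
      Tendsto (fun q : ℝ => π t +
          (q * Real.log (1 + ((Real.exp (c / q) - 1) /
              ∫ s in (0:ℝ)..T, Real.exp (-α (π s) / q)) *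
            ∫ s in (0:ℝ)..t, Real.exp (-α (π s) / q))) • αv)
        (𝓝[>] 0)
        (𝓝 (π t + (sInf ((fun s => α (π s)) '' Set.Icc 0 T) -
            min (sInf ((fun s => α (π s)) '' Set.Icc 0 t) - c)
              (sInf ((fun s => α (π s)) '' Set.Icc t T))) • αv)) := by
  have hf : ContinuousOn (fun s => α (π s)) (Icc 0 T) :=
    α.continuous_of_finiteDimensional.comp_continuousOn hπ
  exact ⟨tendsto_mul_log_integral_exp_neg_div hT hf, fun t ht htT =>
    ((tendsto_mul_log_one_add_div_mul ht htT hf c).smul_const αv).const_add (π t)⟩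

/-- Crystallization (`q → 0` limit) of the `q`-Littelmann operators. -/
theorem crystallization_of_q_littelmann
    {V : Type*} [NormedAddCommGroup V] [NormedSpace ℝ V] [FiniteDimensional ℝ V]
    (T : ℝ) (hT : 0 < T)
    (α : V →ₗ[ℝ] ℝ) (αv : V) (hpair : α αv = 2)
    (π : ℝ → V) (hπ : ContinuousOn π (Set.Icc 0 T)) (hπ0 : π 0 = 0)
    (c : ℝ) :
    Tendsto (fun q : ℝ => q * Real.log (∫ s in (0:ℝ)..T, Real.exp (-α (π s) / q)))
      (𝓝[>] 0) (𝓝 (-sInf ((fun s => α (π s)) '' Set.Icc 0 T))) ∧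
    ∀ t : ℝ, 0 < t → t < T →
      Tendsto (fun q : ℝ => π t +
          (q * Real.log (1 + ((Real.exp (c / q) - 1) /
              ∫ s in (0:ℝ)..T, Real.exp (-α (π s) / q)) *
            ∫ s in (0:ℝ)..t, Real.exp (-α (π s) / q))) • αv)
        (𝓝[>] 0)
        (𝓝 (π t + (sInf ((fun s => α (π s)) '' Set.Icc 0 T) -
            min (sInf ((fun s => α (π s)) '' Set.Icc 0 t) - c)
              (sInf ((fun s => α (π s)) '' Set.Icc t T))) • αv)) :=
  crystallization_of_q_littelmann_general T hT α αv π hπ c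
end

section
/- Analytic tropicalization of subtraction-free rational expressions: for every subtraction-free rational expression f in k variables there is a constant C > 0 such that for all q ∈ (0,1] and all x = (x₁,…,x_k) ∈ ℝ^k, |−q·log eval_f(e^{−x₁/q},…,e^{−x_k/q}) − trop_f(x)| ≤ C·q; in particular −q·log eval_f(e^{−x₁/q},…,e^{−x_k/q}) converges to trop_f(x) uniformly in x as q → 0⁺. -/
/-- Subtraction-free rational expressions in `k` variables: built from variables and positive
real constants using addition, multiplication and division. -/
inductive SFExpr (k : ℕ) : Type
  | var : Fin k → SFExpr k
  | const : (r : ℝ) → 0 < r → SFExpr k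
  | add : SFExpr k → SFExpr k → SFExpr k
  | mul : SFExpr k → SFExpr k → SFExpr k
  | div : SFExpr k → SFExpr k → SFExpr k

/-- Evaluation of a subtraction-free expression. -/
noncomputable def SFExpr.eval {k : ℕ} : SFExpr k → (Fin k → ℝ) → ℝ
  | .var i, x => x i
  | .const r _, _ => r
  | .add f g, x => f.eval x + g.eval x
  | .mul f g, x => f.eval x * g.eval x
  | .div f g, x => f.eval x / g.eval x

/-- Tropicalization: constants become `0`, `+` becomes `min`, `*` becomes `+`, `/` becomes `-`. -/
noncomputable def SFExpr.trop {k : ℕ} : SFExpr k → (Fin k → ℝ) → ℝ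
  | .var i, x => x i
  | .const _ _, _ => 0
  | .add f g, x => min (f.trop x) (g.trop x)
  | .mul f g, x => f.trop x + g.trop x
  | .div f g, x => f.trop x - g.trop x

/-!
Write `D_q f (x) = -q log f(e^{-x/q})` (the Maslov dequantization, `SFExpr.dequant`).
Multiplication and division of positive reals become addition and subtraction of `D_q`-values
exactly, a positive constant `r` contributes `-q log r`, and for addition
`max a b ≤ a + b ≤ 2 max a b` shows that `D_q (f + g)` is within `q log 2` of
`min (D_q f) (D_q g)`. Induction on the expression then bounds `|D_q f - trop f|` by `C_f q`
for every `q > 0`, with `C_f` built from the numbers `|log r|` and `log 2`.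
-/

open Real Filter Topology

lemma abs_log_add_sub_max_log_le {a b : ℝ} (ha : 0 < a) (hb : 0 < b) :
    |log (a + b) - max (log a) (log b)| ≤ log 2 := by
  wlog hba : b ≤ a generalizing a b
  · simpa only [add_comm, max_comm] using this hb ha (le_of_not_ge hba)
  have hlog : log a ≤ log (a + b) := log_le_log ha (by linarith)
  rw [max_eq_left (log_le_log hb hba), abs_of_nonneg (sub_nonneg.mpr hlog), sub_le_iff_le_add,
    ← log_mul two_ne_zero ha.ne']
  exact log_le_log (add_pos ha hb) (by linarith)

lemma abs_neg_mul_log_add_sub_min_le {q a b : ℝ} (hq : 0 ≤ q) (ha : 0 < a) (hb : 0 < b) :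
    |-q * log (a + b) - min (-q * log a) (-q * log b)| ≤ q * log 2 := by
  have hmin : min (-q * log a) (-q * log b) = -q * max (log a) (log b) :=
    (smul_max_of_nonpos (neg_nonpos.mpr hq) _ _).symm
  rw [hmin, ← mul_sub, abs_mul, abs_neg, abs_of_nonneg hq]
  exact mul_le_mul_of_nonneg_left (abs_log_add_sub_max_log_le ha hb) hq

lemma tendstoUniformly_of_dist_le {ι α β : Type*} [PseudoMetricSpace β] {F : ι → α → β}
    {f : α → β} {l : Filter ι} {u : ι → ℝ} (hu : Tendsto u l (𝓝 0))
    (h : ∀ᶠ i in l, ∀ x, dist (f x) (F i x) ≤ u i) : TendstoUniformly F f l := by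
  rw [Metric.tendstoUniformly_iff]
  intro ε hε
  filter_upwards [h, hu.eventually (gt_mem_nhds hε)] with i hi hui x
  exact (hi x).trans_lt hui

namespace SFExpr

variable {k : ℕ}

lemma eval_pos (f : SFExpr k) {x : Fin k → ℝ} (hx : ∀ i, 0 < x i) : 0 < f.eval x := by
  induction f with
  | var i => exact hx i
  | const r hr => exact hr
  | add f g hf hg => exact add_pos hf hg
  | mul f g hf hg => exact mul_pos hf hg
  | div f g hf hg => exact div_pos hf hg

noncomputable def dequant (f : SFExpr k) (q : ℝ) (x : Fin k → ℝ) : ℝ :=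
  -q * log (f.eval fun i => exp (-x i / q))

lemma eval_exp_pos (f : SFExpr k) (q : ℝ) (x : Fin k → ℝ) :
    0 < f.eval fun i => exp (-x i / q) :=
  f.eval_pos fun _ => exp_pos _

lemma dequant_var {q : ℝ} (hq : q ≠ 0) (i : Fin k) (x : Fin k → ℝ) :
    (var i).dequant q x = x i := by
  simp only [dequant, eval, log_exp]
  field_simp

lemma dequant_mul (f g : SFExpr k) (q : ℝ) (x : Fin k → ℝ) :
    (mul f g).dequant q x = f.dequant q x + g.dequant q x := by
  simp only [dequant, eval, log_mul (f.eval_exp_pos q x).ne' (g.eval_exp_pos q x).ne']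
  ring

lemma dequant_div (f g : SFExpr k) (q : ℝ) (x : Fin k → ℝ) :
    (div f g).dequant q x = f.dequant q x - g.dequant q x := by
  simp only [dequant, eval, log_div (f.eval_exp_pos q x).ne' (g.eval_exp_pos q x).ne']
  ring

lemma abs_dequant_add_sub_min_le {q : ℝ} (hq : 0 ≤ q) (f g : SFExpr k) (x : Fin k → ℝ) :
    |(add f g).dequant q x - min (f.dequant q x) (g.dequant q x)| ≤ q * log 2 :=
  abs_neg_mul_log_add_sub_min_le hq (f.eval_exp_pos q x) (g.eval_exp_pos q x)

noncomputable def tropErrorConst : SFExpr k → ℝ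
  | .var _ => 0
  | .const r _ => |log r|
  | .add f g => max f.tropErrorConst g.tropErrorConst + log 2
  | .mul f g => f.tropErrorConst + g.tropErrorConst
  | .div f g => f.tropErrorConst + g.tropErrorConst

lemma tropErrorConst_nonneg (f : SFExpr k) : 0 ≤ f.tropErrorConst := by
  induction f with
  | var i => exact le_rfl
  | const r hr => exact abs_nonneg _
  | add f g hf hg => exact add_nonneg (le_max_of_le_left hf) (log_nonneg one_le_two)
  | mul f g hf hg => exact add_nonneg hf hg
  | div f g hf hg => exact add_nonneg hf hg

theorem abs_dequant_sub_trop_le (f : SFExpr k) {q : ℝ} (hq : 0 < q) (x : Fin k → ℝ) :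
    |f.dequant q x - f.trop x| ≤ f.tropErrorConst * q := by
  induction f with
  | var i => simp [dequant_var hq.ne', trop, tropErrorConst]
  | const r hr =>
    simp [dequant, eval, trop, tropErrorConst, abs_mul, abs_of_pos hq, mul_comm]
  | add f g hf hg =>
    calc |(add f g).dequant q x - (add f g).trop x|
        ≤ |(add f g).dequant q x - min (f.dequant q x) (g.dequant q x)|
          + |min (f.dequant q x) (g.dequant q x) - min (f.trop x) (g.trop x)| :=
          abs_sub_le _ _ _
      _ ≤ q * log 2 + max (f.tropErrorConst * q) (g.tropErrorConst * q) :=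
          add_le_add (abs_dequant_add_sub_min_le hq.le f g x)
            ((abs_min_sub_min_le_max _ _ _ _).trans (max_le_max hf hg))
      _ = (add f g).tropErrorConst * q := by
          rw [tropErrorConst, ← max_mul_of_nonneg _ _ hq.le]
          ring
  | mul f g hf hg =>
    rw [dequant_mul, trop, add_sub_add_comm, tropErrorConst, add_mul]
    exact (abs_add_le _ _).trans (add_le_add hf hg)
  | div f g hf hg =>
    rw [dequant_div, trop, sub_sub_sub_comm, tropErrorConst, add_mul]
    exact (abs_sub _ _).trans (add_le_add hf hg)

end SFExpr

/-- Analytic tropicalization of subtraction-free rational expressions: a uniform `O(q)` bound,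
and in particular uniform convergence to the tropicalization as `q → 0⁺`. -/
theorem analytic_tropicalization {k : ℕ} (f : SFExpr k) :
    (∃ C : ℝ, 0 < C ∧ ∀ q ∈ Set.Ioc (0:ℝ) 1, ∀ x : Fin k → ℝ,
      |(-q) * Real.log (f.eval fun i => Real.exp (-x i / q)) - f.trop x| ≤ C * q) ∧
    TendstoUniformly
      (fun (q : ℝ) (x : Fin k → ℝ) => (-q) * Real.log (f.eval fun i => Real.exp (-x i / q)))
      f.trop (nhdsWithin 0 (Set.Ioi 0)) := by
  set C := f.tropErrorConst + 1
  have hC : 0 < C := by linarith [f.tropErrorConst_nonneg]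
  have hbound : ∀ q, 0 < q → ∀ x, |f.dequant q x - f.trop x| ≤ C * q := fun q hq x =>
    (f.abs_dequant_sub_trop_le hq x).trans (mul_le_mul_of_nonneg_right (by linarith) hq.le)
  refine ⟨⟨C, hC, fun q hq => hbound q hq.1⟩, tendstoUniformly_of_dist_le (u := (C * ·)) ?_ ?_⟩
  · simpa using (tendsto_id.const_mul C).mono_left (nhdsWithin_le_nhds (a := (0 : ℝ)))
  · filter_upwards [self_mem_nhdsWithin] with q hq x
    rw [Real.dist_eq, abs_sub_comm]
    exact hbound q hq x
end

section
/- Degeneration of Gamma laws to exponential laws: fix μ > 0. For β > 0 let ν_β be the pushforward of the Gamma(βμ) distribution under the map x ↦ −β·log x. Then ν_β converges weakly (in distribution) to the exponential distribution Exp(μ) as β → 0⁺; equivalently, for every bounded continuous f : ℝ → ℝ, ∫₀^∞ f(−β·log x)·x^{βμ−1}e^{−x}/Γ(βμ) dx → ∫₀^∞ f(y)·μ·e^{−μy} dy. -/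
open MeasureTheory Filter Topology

/-- The Gamma(`a`) probability measure on `ℝ`, with density `x^{a-1}e^{-x}/Γ(a)` on `(0,∞)`. -/
noncomputable def gammaLaw (a : ℝ) : Measure ℝ :=
  volume.withDensity fun x =>
    ENNReal.ofReal (if 0 < x then x ^ (a - 1) * Real.exp (-x) / Real.Gamma a else 0)

/-- The exponential probability measure on `ℝ` with rate `a`. -/
noncomputable def expLaw (a : ℝ) : Measure ℝ :=
  volume.withDensity fun x =>
    ENNReal.ofReal (if 0 < x then a * Real.exp (-(a * x)) else 0)

/-!
Substituting `x = exp (-y / β)` turns the Gamma(βμ) density, pushed forward by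
`x ↦ -β log x`, into `μ e^{-μy} · exp (-e^{-y/β}) / Γ(βμ + 1)` on all of `ℝ`. As `β → 0⁺`
the factor `exp (-e^{-y/β})` tends to the indicator of `y > 0` and `Γ(βμ + 1) → Γ(1) = 1`.
For `β ≤ 1` that factor is at most `e · exp (-e^{-y})`, and `μ e^{-μy} exp (-e^{-y})` is
integrable (it is the substituted Gamma(μ) integrand), so dominated convergence applies.
-/

open Real Set

theorem integral_withDensity_ofReal_ite_pos {ν : Measure ℝ} {r : ℝ → ℝ} (hr : Measurable r)
    (hr0 : ∀ x, 0 < x → 0 ≤ r x) (g : ℝ → ℝ) :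
    ∫ x, g x ∂ν.withDensity (fun x => ENNReal.ofReal (if 0 < x then r x else 0)) =
      ∫ x in Ioi 0, g x * r x ∂ν := by
  rw [integral_withDensity_eq_integral_toReal_smul
      (Measurable.ite measurableSet_Ioi hr measurable_const).ennreal_ofReal
      (ae_of_all _ fun _ => ENNReal.ofReal_lt_top), ← integral_indicator measurableSet_Ioi]
  congr 1 with x
  by_cases hx : 0 < x
  · simp [hx, hr0 x hx, mul_comm]
  · simp [hx]

theorem integral_gammaLaw {a : ℝ} (ha : 0 < a) (g : ℝ → ℝ) :
    ∫ x, g x ∂gammaLaw a = ∫ x in Ioi 0, g x * (x ^ (a - 1) * exp (-x) / Gamma a) :=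
  integral_withDensity_ofReal_ite_pos (by fun_prop)
    (fun x hx => by have := Gamma_pos_of_pos ha; positivity) g

theorem integral_expLaw {a : ℝ} (ha : 0 ≤ a) (g : ℝ → ℝ) :
    ∫ x, g x ∂expLaw a = ∫ x in Ioi 0, g x * (a * exp (-a * x)) := by
  rw [expLaw, integral_withDensity_ofReal_ite_pos (by fun_prop) (fun x _ => by positivity)]
  simp only [neg_mul]

section ExpNegDivSubstitution

variable {β : ℝ}

theorem image_univ_exp_neg_div (hβ : β ≠ 0) : (fun y => exp (-y / β)) '' univ = Ioi 0 := by
  rw [image_univ, ← range_exp]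
  exact (Function.LeftInverse.surjective (g := fun x => -β * x) fun x => by
    field_simp).range_comp exp

theorem injective_exp_neg_div (hβ : β ≠ 0) : Function.Injective fun y => exp (-y / β) :=
  fun y z h => by simpa [div_left_inj' hβ] using exp_injective h

theorem hasDerivAt_exp_neg_div (β y : ℝ) :
    HasDerivAt (fun y => exp (-y / β)) (exp (-y / β) * (-1 / β)) y :=
  ((hasDerivAt_id y).neg.div_const β).exp

theorem abs_deriv_exp_neg_div (hβ : 0 < β) (y : ℝ) :
    |exp (-y / β) * (-1 / β)| = exp (-y / β) / β := by
  rw [abs_mul, abs_of_pos (exp_pos _), abs_div, abs_neg, abs_one, abs_of_pos hβ, mul_one_div]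

variable {E : Type*} [NormedAddCommGroup E] [NormedSpace ℝ E]

theorem integral_Ioi_zero_eq_integral_exp_neg_div (hβ : 0 < β) (g : ℝ → E) :
    ∫ x in Ioi 0, g x = ∫ y, (exp (-y / β) / β) • g (exp (-y / β)) := by
  rw [← image_univ_exp_neg_div hβ.ne', integral_image_eq_integral_abs_deriv_smul
    MeasurableSet.univ (fun y _ => (hasDerivAt_exp_neg_div β y).hasDerivWithinAt)
    (injective_exp_neg_div hβ.ne').injOn g, Measure.restrict_univ]
  simp only [abs_deriv_exp_neg_div hβ]

theorem integrableOn_Ioi_zero_iff_integrable_exp_neg_div (hβ : 0 < β) (g : ℝ → E) :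
    IntegrableOn g (Ioi 0) ↔ Integrable fun y => (exp (-y / β) / β) • g (exp (-y / β)) := by
  rw [← image_univ_exp_neg_div hβ.ne', integrableOn_image_iff_integrableOn_abs_deriv_smul
    MeasurableSet.univ (fun y _ => (hasDerivAt_exp_neg_div β y).hasDerivWithinAt)
    (injective_exp_neg_div hβ.ne').injOn g, IntegrableOn, Measure.restrict_univ]
  simp only [abs_deriv_exp_neg_div hβ]

end ExpNegDivSubstitution

theorem exp_neg_div_mul_rpow_mul_sub_one {β : ℝ} (hβ : β ≠ 0) (μ y : ℝ) :
    exp (-y / β) * exp (-y / β) ^ (β * μ - 1) = exp (-μ * y) := by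
  rw [← exp_mul, ← exp_add]
  congr 1
  field_simp
  ring

theorem gammaDensity_exp_neg_div {β μ : ℝ} (hβ : 0 < β) (hμ : 0 < μ) (y : ℝ) :
    exp (-y / β) / β * (exp (-y / β) ^ (β * μ - 1) * exp (-exp (-y / β)) / Gamma (β * μ)) =
      μ * exp (-μ * y) * exp (-exp (-y / β)) / Gamma (β * μ + 1) := by
  have hβμ : 0 < β * μ := mul_pos hβ hμ
  rw [Gamma_add_one hβμ.ne', ← exp_neg_div_mul_rpow_mul_sub_one hβ.ne']
  have := Gamma_pos_of_pos hβμ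
  field_simp

theorem integrable_exp_neg_mul_mul_exp_neg_exp_neg_div {β μ : ℝ} (hβ : 0 < β) (hμ : 0 < μ) :
    Integrable fun y => exp (-μ * y) * exp (-exp (-y / β)) := by
  have h := ((integrableOn_Ioi_zero_iff_integrable_exp_neg_div hβ _).mp
    (GammaIntegral_convergent (mul_pos hβ hμ))).const_mul β
  refine h.congr (ae_of_all _ fun y => ?_)
  simp only [smul_eq_mul, ← exp_neg_div_mul_rpow_mul_sub_one hβ.ne' μ y]
  field_simp

theorem tendsto_exp_neg_exp_neg_div {y : ℝ} (hy : y ≠ 0) :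
    Tendsto (fun β => exp (-exp (-y / β))) (𝓝[>] 0) (𝓝 ((Ioi 0).indicator 1 y)) := by
  simp only [div_eq_mul_inv]
  rcases hy.lt_or_gt with hy | hy
  · have h : Tendsto (fun β => -y * β⁻¹) (𝓝[>] 0) atTop :=
      tendsto_inv_nhdsGT_zero.const_mul_atTop (neg_pos.mpr hy)
    rw [indicator_of_notMem (s := Ioi 0) (not_lt.mpr hy.le)]
    exact tendsto_exp_atBot.comp (tendsto_neg_atTop_atBot.comp (tendsto_exp_atTop.comp h))
  · have h : Tendsto (fun β => -y * β⁻¹) (𝓝[>] 0) atBot :=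
      tendsto_inv_nhdsGT_zero.const_mul_atTop_of_neg (neg_neg_of_pos hy)
    rw [indicator_of_mem (mem_Ioi.mpr hy), Pi.one_apply]
    simpa [Function.comp_def] using (continuous_exp.tendsto _).comp (tendsto_exp_atBot.comp h).neg

theorem exp_neg_exp_neg_div_le {β β₀ : ℝ} (hβ : 0 < β) (hββ₀ : β ≤ β₀) (y : ℝ) :
    exp (-exp (-y / β)) ≤ exp 1 * exp (-exp (-y / β₀)) := by
  rw [← exp_add, exp_le_exp]
  rcases le_or_gt 0 y with hy | hy
  · have : exp (-y / β₀) ≤ 1 :=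
      exp_le_one_iff.mpr <|
        div_nonpos_of_nonpos_of_nonneg (neg_nonpos.mpr hy) (hβ.trans_le hββ₀).le
    linarith [exp_pos (-y / β)]
  · have : -y / β₀ ≤ -y / β := div_le_div_of_nonneg_left (by linarith) hβ hββ₀
    linarith [exp_le_exp.mpr this]

theorem tendsto_integral_mul_exp_neg_mul_mul_exp_neg_exp_neg_div {f : ℝ → ℝ}
    (hf : AEStronglyMeasurable f) {M : ℝ} (hfM : ∀ y, |f y| ≤ M) {μ : ℝ} (hμ : 0 < μ) :
    Tendsto (fun β => ∫ y, f y * (μ * exp (-μ * y) * exp (-exp (-y / β)))) (𝓝[>] 0)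
      (𝓝 (∫ y in Ioi 0, f y * (μ * exp (-μ * y)))) := by
  rw [← integral_indicator measurableSet_Ioi]
  refine tendsto_integral_filter_of_dominated_convergence
    (fun y => M * μ * exp 1 * (exp (-μ * y) * exp (-exp (-y / 1)))) ?_ ?_
    ((integrable_exp_neg_mul_mul_exp_neg_exp_neg_div one_pos hμ).const_mul _) ?_
  · exact .of_forall fun β => hf.mul (by fun_prop : Continuous _).aestronglyMeasurable
  · filter_upwards [Ioc_mem_nhdsGT one_pos] with β hβ
    refine .of_forall fun y => ?_
    rw [norm_mul, Real.norm_eq_abs,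
      Real.norm_of_nonneg (by positivity : 0 ≤ μ * exp (-μ * y) * exp (-exp (-y / β)))]
    calc |f y| * (μ * exp (-μ * y) * exp (-exp (-y / β)))
        ≤ M * (μ * exp (-μ * y) * (exp 1 * exp (-exp (-y / 1)))) := by
          gcongr
          · exact (abs_nonneg _).trans (hfM y)
          · exact hfM y
          · exact exp_neg_exp_neg_div_le hβ.1 hβ.2 y
      _ = M * μ * exp 1 * (exp (-μ * y) * exp (-exp (-y / 1))) := by ring
  · filter_upwards [Measure.ae_ne volume 0] with y hy
    simpa only [indicator_apply, mem_Ioi, Pi.one_apply, mul_ite, mul_one, mul_zero, mul_assoc]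
      using (tendsto_exp_neg_exp_neg_div hy).const_mul (f y * (μ * exp (-μ * y)))

theorem tendsto_Gamma_mul_add_one (μ : ℝ) :
    Tendsto (fun β => Gamma (β * μ + 1)) (𝓝 0) (𝓝 1) := by
  have hΓ : ContinuousAt Gamma 1 :=
    (differentiableAt_Gamma fun m => by linarith [(m.cast_nonneg : (0 : ℝ) ≤ m)]).continuousAt
  simpa only [Function.comp_def, Gamma_one] using
    hΓ.tendsto.comp ((by fun_prop : Continuous fun β : ℝ => β * μ + 1).tendsto' 0 1 (by simp))

theorem integral_Ioi_comp_neg_mul_log_mul_gammaDensity {β μ : ℝ} (hβ : 0 < β) (hμ : 0 < μ)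
    (f : ℝ → ℝ) :
    ∫ x in Ioi 0, f (-β * log x) * (x ^ (β * μ - 1) * exp (-x) / Gamma (β * μ)) =
      (∫ y, f y * (μ * exp (-μ * y) * exp (-exp (-y / β)))) / Gamma (β * μ + 1) := by
  rw [integral_Ioi_zero_eq_integral_exp_neg_div hβ, ← integral_div]
  congr 1 with y
  have hlog : -β * log (exp (-y / β)) = y := by
    rw [log_exp]
    field_simp
  rw [smul_eq_mul, hlog, mul_left_comm, gammaDensity_exp_neg_div hβ hμ y]
  ring

/-- Degeneration of Gamma laws to exponential laws: the pushforward of Gamma(βμ) under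
`x ↦ -β·log x` converges in distribution, as `β → 0⁺`, to Exp(μ). -/
theorem gamma_degenerates_to_exponential (μ : ℝ) (hμ : 0 < μ)
    (f : ℝ → ℝ) (hf : Continuous f) (hfb : ∃ M, ∀ x, |f x| ≤ M) :
    Tendsto (fun β : ℝ =>
        ∫ y, f y ∂(Measure.map (fun x => -β * Real.log x) (gammaLaw (β * μ))))
      (𝓝[>] 0) (𝓝 (∫ y, f y ∂(expLaw μ))) ∧
    Tendsto (fun β : ℝ => ∫ x in Set.Ioi (0:ℝ),
        f (-β * Real.log x) * (x ^ (β * μ - 1) * Real.exp (-x) / Real.Gamma (β * μ)))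
      (𝓝[>] 0) (𝓝 (∫ y in Set.Ioi (0:ℝ), f y * (μ * Real.exp (-μ * y)))) := by
  obtain ⟨M, hfM⟩ := hfb
  have hnumerator := tendsto_integral_mul_exp_neg_mul_mul_exp_neg_exp_neg_div
    hf.aestronglyMeasurable hfM hμ
  have hGamma := (tendsto_Gamma_mul_add_one μ).mono_left (nhdsWithin_le_nhds (s := Ioi 0))
  have hdensity := (hnumerator.div hGamma one_ne_zero).congr' <|
    eventually_nhdsWithin_of_forall fun β hβ =>
      (integral_Ioi_comp_neg_mul_log_mul_gammaDensity hβ hμ f).symm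
  rw [div_one] at hdensity
  refine ⟨?_, hdensity⟩
  rw [integral_expLaw hμ.le]
  refine hdensity.congr' <| eventually_nhdsWithin_of_forall fun β hβ => ?_
  dsimp only
  rw [integral_map (by fun_prop) hf.aestronglyMeasurable, integral_gammaLaw (mul_pos hβ hμ)]
end

section
/- Semigroup property of intertwined Markov kernels: let S and S₀ be measurable spaces, φ : S → S₀ a measurable map, (P_t)_{t≥0} a family of Markov kernels from S to S satisfying the Chapman–Kolmogorov property (for all s, t ≥ 0 and x ∈ S, P_{t+s}(x,·) = ∫_S P_s(z,·) P_t(x,dz)), and K a Markov kernel from S₀ to S such that for every y ∈ S₀ the pushforward of K(y,·) under φ is the Dirac mass δ_y. For t ≥ 0 define the Markov kernel Q_t from S₀ to S₀ by Q_t(y,·) = pushforward under φ of ∫_S P_t(x,·) K(y,dx), and assume the intertwining relation: for all t ≥ 0 and y ∈ S₀, ∫_S P_t(x,·) K(y,dx) = ∫_{S₀} K(z,·) Q_t(y,dz). Then (Q_t)_{t≥0} also satisfies the Chapman–Kolmogorov property: Q_{t+s}(y,·) = ∫_{S₀} Q_s(z,·) Q_t(y,dz) for all s, t ≥ 0 and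 y ∈ S₀. -/
open MeasureTheory

namespace MeasureTheory.Measure

variable {α β γ : Type*} [MeasurableSpace α] [MeasurableSpace β] [MeasurableSpace γ]

theorem map_bind {m : Measure α} {κ : α → Measure β} (hκ : AEMeasurable κ m) {f : β → γ}
    (hf : Measurable f) : (m.bind κ).map f = m.bind fun a => (κ a).map f := by
  have hdf : Measurable fun b => dirac (f b) := measurable_dirac.comp hf
  simp_rw [← bind_dirac_eq_map _ hf]
  exact bind_bind hκ hdf.aemeasurable

end MeasureTheory.Measure

open Measure

theorem intertwined_kernels_semigroup_general {S S₀ : Type*} [MeasurableSpace S] [MeasurableSpace S₀]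
    (φ : S → S₀) (hφ : Measurable φ)
    (P : ℝ → S → Measure S)
    (hPmeas : ∀ t, Measurable (P t))
    (hCK : ∀ s t : ℝ, 0 ≤ s → 0 ≤ t → ∀ x, P (t + s) x = (P t x).bind (P s))
    (K : S₀ → Measure S)
    (hKmeas : Measurable K)
    (Q : ℝ → S₀ → Measure S₀)
    (hQ : ∀ t y, Q t y = ((K y).bind (P t)).map φ)
    (hIntertwine : ∀ t : ℝ, 0 ≤ t → ∀ y, (K y).bind (P t) = (Q t y).bind K) :
    ∀ s t : ℝ, 0 ≤ s → 0 ≤ t → ∀ y, Q (t + s) y = (Q t y).bind (Q s) := by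
  intro s t hs ht y
  have hKPs : Measurable fun z => (K z).bind (P s) := (measurable_bind' (hPmeas s)).comp hKmeas
  calc Q (t + s) y = ((K y).bind fun x => (P t x).bind (P s)).map φ := by
        rw [hQ, funext (hCK s t hs ht)]
    _ = (((Q t y).bind K).bind (P s)).map φ := by
        rw [← bind_bind (hPmeas t).aemeasurable (hPmeas s).aemeasurable, hIntertwine t ht]
    _ = (Q t y).bind fun z => ((K z).bind (P s)).map φ := by
        rw [bind_bind hKmeas.aemeasurable (hPmeas s).aemeasurable, map_bind hKPs.aemeasurable hφ]
    _ = (Q t y).bind (Q s) := by simp_rw [← hQ]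

/-- Semigroup property of intertwined Markov kernels: if `(P_t)` satisfies Chapman–Kolmogorov,
`K` is a Markov kernel with `φ`-pushforward the Dirac mass, `Q_t` is defined by
`Q_t(y,·) = (K(y,·) ∘ P_t)` pushed forward by `φ`, and the intertwining relation
`K ∘ P_t = Q_t ∘ K` holds, then `(Q_t)` satisfies Chapman–Kolmogorov. -/
theorem intertwined_kernels_semigroup {S S₀ : Type*} [MeasurableSpace S] [MeasurableSpace S₀]
    (φ : S → S₀) (hφ : Measurable φ)
    (P : ℝ → S → Measure S)
    (hPmeas : ∀ t, Measurable (P t))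
    (hPprob : ∀ t x, IsProbabilityMeasure (P t x))
    (hCK : ∀ s t : ℝ, 0 ≤ s → 0 ≤ t → ∀ x, P (t + s) x = (P t x).bind (P s))
    (K : S₀ → Measure S)
    (hKmeas : Measurable K)
    (hKprob : ∀ y, IsProbabilityMeasure (K y))
    (hKφ : ∀ y, (K y).map φ = Measure.dirac y)
    (Q : ℝ → S₀ → Measure S₀)
    (hQ : ∀ t y, Q t y = ((K y).bind (P t)).map φ)
    (hIntertwine : ∀ t : ℝ, 0 ≤ t → ∀ y, (K y).bind (P t) = (Q t y).bind K) :
    ∀ s t : ℝ, 0 ≤ s → 0 ≤ t → ∀ y, Q (t + s) y = (Q t y).bind (Q s) :=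
  intertwined_kernels_semigroup_general φ hφ P hPmeas hCK K hKmeas Q hQ hIntertwine
end

section
/- Monomial change between Lusztig-type and Kashiwara-type coordinates: let (α_i)_{i∈I} be linear forms on V and (α_i^∨)_{i∈I} vectors in V with α_i(α_i^∨) = 2 for all i; let s_i act on V by s_i(v) = v − α_i(v)·α_i^∨ and on linear forms by s_i(ξ) = ξ − ξ(α_i^∨)·α_i. Fix a word (i₁,…,i_j) in I, set β_k = s_{i₁}∘⋯∘s_{i_{k−1}}(α_{i_k}) (a linear form) and β_k^∨ = s_{i₁}∘⋯∘s_{i_{k−1}}(α_{i_k}^∨) ∈ V, and let w = s_{i₁}∘⋯∘s_{i_j} acting on V. Then for positive reals t₁,…,t_j and c₁,…,c_j the following are equivalent: (ii) for all 1 ≤ k ≤ j, t_k = c_k·Π_{l<k} c_l^{α_{i_k}(α_{i_l}^∨)}; (iii) for all 1 ≤ k ≤ j, c_k = t_k·Π_{l<k} t_l^{β_k(β_l^∨)}. Moreover, in that case Σ_{k=1}^j log(c_k)·α_{i_k}^∨ = −Σ_{k=1}^j log(t_k)·w^{−1}(β_k^∨). -/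
/-- The reflection `s_i` on vectors: `v ↦ v - ξ(v)·v₀`. -/
def reflV {V : Type*} [AddCommGroup V] [Module ℝ V]
    (ξ : V →ₗ[ℝ] ℝ) (v₀ : V) (v : V) : V :=
  v - ξ v • v₀

/-- The reflection `s_i` on linear forms: `η ↦ η - η(v₀)·ξ`. -/
noncomputable def reflF {V : Type*} [AddCommGroup V] [Module ℝ V]
    (ξ : V →ₗ[ℝ] ℝ) (v₀ : V) (η : V →ₗ[ℝ] ℝ) : V →ₗ[ℝ] ℝ :=
  η - η v₀ • ξ

/-- `β_k = s_{i₁} ∘ ⋯ ∘ s_{i_{k-1}} (α_{i_k})` as a linear form. -/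
noncomputable def betaForm {V : Type*} [AddCommGroup V] [Module ℝ V] {I : Type*}
    (a : I → V →ₗ[ℝ] ℝ) (av : I → V) {j : ℕ} (idx : Fin j → I) (k : Fin j) : V →ₗ[ℝ] ℝ :=
  ((List.ofFn idx).take k.1).foldr (fun i η => reflF (a i) (av i) η) (a (idx k))

/-- `β_k^∨ = s_{i₁} ∘ ⋯ ∘ s_{i_{k-1}} (α_{i_k}^∨)` as a vector. -/
def betaVec {V : Type*} [AddCommGroup V] [Module ℝ V] {I : Type*}
    (a : I → V →ₗ[ℝ] ℝ) (av : I → V) {j : ℕ} (idx : Fin j → I) (k : Fin j) : V :=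
  ((List.ofFn idx).take k.1).foldr (fun i v => reflV (a i) (av i) v) (av (idx k))

/-- `w⁻¹ = s_{i_j} ∘ ⋯ ∘ s_{i₁}` acting on `V`, where `w = s_{i₁} ∘ ⋯ ∘ s_{i_j}`. -/
def wInv {V : Type*} [AddCommGroup V] [Module ℝ V] {I : Type*}
    (a : I → V →ₗ[ℝ] ℝ) (av : I → V) {j : ℕ} (idx : Fin j → I) (v : V) : V :=
  (List.ofFn idx).foldl (fun u i => reflV (a i) (av i) u) v

/-!
Taking logarithms, (ii) and (iii) say `log t = L_α log c` and `log c = L_β log t` for the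
unitriangular matrices `L_α`, `L_β` with strictly lower entries `α_{i_k}(α_{i_l}^∨)` and
`β_k(β_l^∨)`, so everything follows from `L_α L_β = 1`. With `P_n = s_{i_n} ⋯ s_{i_1}` one has
`β_k = α_{i_k} ∘ P_{k-1}`, and `P_n(β_l^∨) = -∑_{m ≤ n} (L_β)_{ml} α_{i_m}^∨` for `n ≥ l` by
induction, since `s_{i_m}` adds `β_m(β_l^∨) α_{i_m}^∨` to `-P_{m-1}(β_l^∨)`. Applying `α_{i_k}`
at `n = k - 1` gives `(L_α L_β)_{kl} = 0` for `l < k`; at `n = j` it gives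
`w⁻¹(β_l^∨) = -∑_m (L_β)_{ml} α_{i_m}^∨`, which is the last identity.
-/

open Matrix

section Reflections

variable {V : Type*} [AddCommGroup V] [Module ℝ V] {I : Type*}

lemma reflF_apply (ξ : V →ₗ[ℝ] ℝ) (v₀ : V) (η : V →ₗ[ℝ] ℝ) (v : V) :
    reflF ξ v₀ η v = η (reflV ξ v₀ v) := by
  simp [reflF, reflV, mul_comm]

lemma reflV_reflV {ξ : V →ₗ[ℝ] ℝ} {v₀ : V} (h : ξ v₀ = 2) (v : V) :
    reflV ξ v₀ (reflV ξ v₀ v) = v := by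
  simp only [reflV, map_sub, map_smul, h, smul_eq_mul]
  module

lemma reflV_self {ξ : V →ₗ[ℝ] ℝ} {v₀ : V} (h : ξ v₀ = 2) : reflV ξ v₀ v₀ = -v₀ := by
  simp only [reflV, h]
  module

variable (a : I → V →ₗ[ℝ] ℝ) (av : I → V)

lemma foldr_reflF_apply (L : List I) (η : V →ₗ[ℝ] ℝ) (v : V) :
    L.foldr (fun i η => reflF (a i) (av i) η) η v
      = η (L.foldl (fun u i => reflV (a i) (av i) u) v) := by
  induction L generalizing v with
  | nil => rfl
  | cons i L ih => rw [List.foldr_cons, reflF_apply, ih, List.foldl_cons]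

lemma foldl_reflV_foldr_reflV (hpair : ∀ i, a i (av i) = 2) (L : List I) (v : V) :
    L.foldl (fun u i => reflV (a i) (av i) u)
      (L.foldr (fun i u => reflV (a i) (av i) u) v) = v := by
  induction L generalizing v with
  | nil => rfl
  | cons i L ih => rw [List.foldr_cons, List.foldl_cons, reflV_reflV (hpair i), ih]

variable {j : ℕ} (idx : Fin j → I)

/-- `s_{i_n} ∘ ⋯ ∘ s_{i_1}`, the inverse of the product of the first `n` letters of the word. -/
def prefixInv (n : ℕ) (v : V) : V :=
  ((List.ofFn idx).take n).foldl (fun u i => reflV (a i) (av i) u) v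

lemma prefixInv_succ {n : ℕ} (hn : n < j) (v : V) :
    prefixInv a av idx (n + 1) v
      = reflV (a (idx ⟨n, hn⟩)) (av (idx ⟨n, hn⟩)) (prefixInv a av idx n v) := by
  rw [prefixInv, List.take_succ_eq_append_getElem (by simpa using hn), List.foldl_append,
    List.getElem_ofFn]
  rfl

lemma wInv_eq_prefixInv : wInv a av idx = prefixInv a av idx j := by
  ext v
  rw [wInv, prefixInv, List.take_of_length_le (by simp)]

lemma betaForm_apply (k : Fin j) (v : V) :
    betaForm a av idx k v = a (idx k) (prefixInv a av idx k v) :=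
  foldr_reflF_apply a av _ _ v

lemma prefixInv_succ_betaVec_self (hpair : ∀ i, a i (av i) = 2) (l : Fin j) :
    prefixInv a av idx (l.1 + 1) (betaVec a av idx l) = -av (idx l) := by
  rw [prefixInv_succ a av idx l.isLt, Fin.eta, prefixInv, betaVec,
    foldl_reflV_foldr_reflV a av hpair, reflV_self (hpair _)]

end Reflections

section UnitLower

variable {R : Type*} [Semiring R] {j : ℕ}

def unitLower (M : Fin j → Fin j → R) : Matrix (Fin j) (Fin j) R :=
  1 + Matrix.of fun k l => if l < k then M k l else 0

variable (M : Fin j → Fin j → R)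

lemma unitLower_apply_of_lt {k l : Fin j} (h : l < k) : unitLower M k l = M k l := by
  simp [unitLower, h, h.ne']

lemma unitLower_apply_self (k : Fin j) : unitLower M k k = 1 := by
  simp [unitLower]

lemma unitLower_apply_of_gt {k l : Fin j} (h : k < l) : unitLower M k l = 0 := by
  simp [unitLower, h.ne, h.not_gt]

lemma unitLower_mulVec_apply (x : Fin j → R) (k : Fin j) :
    (unitLower M *ᵥ x) k = x k + ∑ l ∈ Finset.univ.filter (· < k), M k l * x l := by
  rw [unitLower, add_mulVec, one_mulVec, Pi.add_apply]
  simp [mulVec, dotProduct, Finset.sum_filter, ite_mul]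

end UnitLower

lemma eq_mulVec_iff_eq_mulVec_of_mul_eq_one {R n : Type*} [CommRing R] [Fintype n]
    [DecidableEq n] {A B : Matrix n n R} (h : A * B = 1) (x y : n → R) :
    y = A *ᵥ x ↔ x = B *ᵥ y := by
  have h' : B * A = 1 := mul_eq_one_comm.mp h
  constructor <;> rintro rfl
  · rw [mulVec_mulVec, h', one_mulVec]
  · rw [mulVec_mulVec, h, one_mulVec]

lemma sum_smul_sum_smul_eq_sum_mulVec_smul {R V n : Type*} [CommSemiring R] [AddCommMonoid V]
    [Module R V] [Fintype n] (M : Matrix n n R) (y : n → R) (v : n → V) :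
    ∑ l, y l • ∑ m, M m l • v m = ∑ m, (M *ᵥ y) m • v m := by
  simp only [mulVec, dotProduct, Finset.smul_sum, Finset.sum_smul, smul_smul]
  rw [Finset.sum_comm]
  simp_rw [mul_comm]

lemma eq_mul_prod_rpow_iff_log {ι : Type*} {p q : ℝ} (hp : 0 < p) (hq : 0 < q)
    (s : Finset ι) {f : ι → ℝ} (hf : ∀ l ∈ s, 0 < f l) (g : ι → ℝ) :
    p = q * ∏ l ∈ s, f l ^ g l ↔ Real.log p = Real.log q + ∑ l ∈ s, g l * Real.log (f l) := by
  have hprod : 0 < ∏ l ∈ s, f l ^ g l :=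
    Finset.prod_pos fun l hl => Real.rpow_pos_of_pos (hf l hl) _
  rw [← Real.log_injOn_pos.eq_iff hp (mul_pos hq hprod), Real.log_mul hq.ne' hprod.ne',
    Real.log_prod fun l hl => (Real.rpow_pos_of_pos (hf l hl) _).ne',
    Finset.sum_congr rfl fun l hl => Real.log_rpow (hf l hl) (g l)]

section Pairings

variable {V : Type*} [AddCommGroup V] [Module ℝ V] {I : Type*}
  (a : I → V →ₗ[ℝ] ℝ) (av : I → V) {j : ℕ} (idx : Fin j → I)

def cartanPairing (k l : Fin j) : ℝ := a (idx k) (av (idx l))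

noncomputable def betaPairing (k l : Fin j) : ℝ := betaForm a av idx k (betaVec a av idx l)

lemma prefixInv_betaVec (hpair : ∀ i, a i (av i) = 2) (l : Fin j) {n : ℕ} (hln : l.1 < n)
    (hnj : n ≤ j) :
    prefixInv a av idx n (betaVec a av idx l)
      = -∑ m ∈ Finset.univ.filter (fun m : Fin j => m.1 < n),
          unitLower (betaPairing a av idx) m l • av (idx m) := by
  induction n, hln using Nat.le_induction with
  | base =>
    rw [prefixInv_succ_betaVec_self a av idx hpair, Finset.sum_eq_single l]
    · rw [unitLower_apply_self, one_smul]
    · intro m hm hml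
      have hlt : m < l := by
        simp only [Finset.mem_filter, Finset.mem_univ, true_and] at hm
        exact lt_of_le_of_ne (Nat.le_of_lt_succ hm) hml
      rw [unitLower_apply_of_gt _ hlt, zero_smul]
    · simp
  | succ n hln ih =>
    have hn : n < j := hnj
    have hsplit : Finset.univ.filter (fun m : Fin j => m.1 < n + 1)
        = insert ⟨n, hn⟩ (Finset.univ.filter (fun m : Fin j => m.1 < n)) := by
      ext m
      simp only [Finset.mem_filter, Finset.mem_univ, true_and, Finset.mem_insert, Fin.ext_iff]
      omega
    have hpairing : a (idx ⟨n, hn⟩) (prefixInv a av idx n (betaVec a av idx l))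
        = unitLower (betaPairing a av idx) ⟨n, hn⟩ l := by
      rw [unitLower_apply_of_lt _ (show l < ⟨n, hn⟩ from hln), betaPairing, betaForm_apply]
    rw [prefixInv_succ a av idx hn, reflV, hpairing, ih hn.le, hsplit,
      Finset.sum_insert (by simp)]
    abel

lemma betaPairing_eq_neg_sum (hpair : ∀ i, a i (av i) = 2) {k l : Fin j} (hlk : l < k) :
    betaPairing a av idx k l
      = -∑ m ∈ Finset.univ.filter (· < k),
          cartanPairing a av idx k m * unitLower (betaPairing a av idx) m l := by
  rw [betaPairing, betaForm_apply, prefixInv_betaVec a av idx hpair l hlk k.isLt.le]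
  simp only [map_neg, map_sum, map_smul, smul_eq_mul, cartanPairing, mul_comm]
  rfl

lemma wInv_betaVec (hpair : ∀ i, a i (av i) = 2) (l : Fin j) :
    wInv a av idx (betaVec a av idx l)
      = -∑ m, unitLower (betaPairing a av idx) m l • av (idx m) := by
  rw [wInv_eq_prefixInv, prefixInv_betaVec a av idx hpair l l.isLt le_rfl,
    Finset.filter_true_of_mem fun m _ => m.isLt]

lemma unitLower_cartanPairing_mul_unitLower_betaPairing (hpair : ∀ i, a i (av i) = 2) :
    unitLower (cartanPairing a av idx) * unitLower (betaPairing a av idx) = 1 := by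
  ext k l
  change (unitLower _ *ᵥ fun m => unitLower (betaPairing a av idx) m l) k = _
  rw [unitLower_mulVec_apply]
  rcases lt_trichotomy l k with hlk | rfl | hkl
  · rw [unitLower_apply_of_lt _ hlk, betaPairing_eq_neg_sum a av idx hpair hlk,
      one_apply_ne hlk.ne', neg_add_cancel]
  · rw [unitLower_apply_self, one_apply_eq, add_eq_left]
    refine Finset.sum_eq_zero fun m hm => ?_
    rw [unitLower_apply_of_gt _ (by simpa using hm), mul_zero]
  · rw [unitLower_apply_of_gt _ hkl, one_apply_ne hkl.ne, zero_add]
    refine Finset.sum_eq_zero fun m hm => ?_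
    rw [unitLower_apply_of_gt _ ((by simpa using hm : m < k).trans hkl), mul_zero]

end Pairings

lemma forall_eq_mul_prod_rpow_iff {j : ℕ} {t c : Fin j → ℝ} (ht : ∀ k, 0 < t k)
    (hc : ∀ k, 0 < c k) (M : Fin j → Fin j → ℝ) :
    (∀ k, t k = c k * ∏ l ∈ Finset.univ.filter (· < k), c l ^ M k l)
      ↔ (fun k => Real.log (t k)) = unitLower M *ᵥ fun k => Real.log (c k) := by
  simp only [funext_iff, unitLower_mulVec_apply]
  exact forall_congr' fun k => eq_mul_prod_rpow_iff_log (ht k) (hc k) _ (fun l _ => hc l) _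

/-- Monomial change between Lusztig-type and Kashiwara-type coordinates. -/
theorem monomial_change_lusztig_kashiwara
    {V : Type*} [AddCommGroup V] [Module ℝ V] {I : Type*}
    (a : I → V →ₗ[ℝ] ℝ) (av : I → V) (hpair : ∀ i, a i (av i) = 2)
    {j : ℕ} (idx : Fin j → I)
    (t c : Fin j → ℝ) (ht : ∀ k, 0 < t k) (hc : ∀ k, 0 < c k) :
    ((∀ k, t k = c k * ∏ l ∈ Finset.univ.filter (· < k),
        c l ^ (a (idx k) (av (idx l)))) ↔
      (∀ k, c k = t k * ∏ l ∈ Finset.univ.filter (· < k),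
        t l ^ (betaForm a av idx k (betaVec a av idx l)))) ∧
    ((∀ k, t k = c k * ∏ l ∈ Finset.univ.filter (· < k),
        c l ^ (a (idx k) (av (idx l)))) →
      ∑ k, Real.log (c k) • av (idx k) =
        -∑ k, Real.log (t k) • wInv a av idx (betaVec a av idx k)) := by
  have hlusztig := forall_eq_mul_prod_rpow_iff ht hc (cartanPairing a av idx)
  have hkashiwara := forall_eq_mul_prod_rpow_iff hc ht (betaPairing a av idx)
  have hchange := eq_mulVec_iff_eq_mulVec_of_mul_eq_one
    (unitLower_cartanPairing_mul_unitLower_betaPairing a av idx hpair)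
    (fun k => Real.log (c k)) (fun k => Real.log (t k))
  have hequiv := hlusztig.trans (hchange.trans hkashiwara.symm)
  refine ⟨hequiv, fun h => ?_⟩
  have hlog := congrFun (hchange.mp (hlusztig.mp h))
  simp only [wInv_betaVec a av idx hpair, smul_neg, Finset.sum_neg_distrib, neg_neg,
    sum_smul_sum_smul_eq_sum_mulVec_smul, ← hlog]
end
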